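/- arXiv:2507.11887 — 10 statements merged into one kernel-verified Lean document; each statement's English description precedes it below -/
import Mathlib

section
/- Let a, b ∈ (0,1). Let W be a random variable with values in ℤ_{≥0}, and let Y₁ ~ Geom(a) and Y₂ ~ Geom(b) be such that W, Y₁, Y₂ are mutually independent. Set L = W + Y₁ + Y₂. Then for every integer d ≥ 0 (with the convention P(L ≤ m) = 0 for m < 0), P(W ≤ d) = ( P(L ≤ d) − (a+b)·P(L ≤ d−1) + ab·P(L ≤ d−2) ) / ((1−a)(1−b)). -/
open MeasureTheory ProbabilityTheory

/-- `X` has the geometric distribution with parameter `p` under `P`: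
`P(X = k) = (1-p) p^k` for every `k ∈ ℤ_{≥0}`. -/
def HasGeomLaw {Ω : Type*} [MeasurableSpace Ω] (P : Measure Ω) (X : Ω → ℕ) (p : ℝ) : Prop :=
  ∀ k : ℕ, P {x | X x = k} = ENNReal.ofReal ((1 - p) * p ^ k)

/-!
Conditioning on the value `k` of a `Geom(p)` variable `Y` independent of `X` writes
`F_{X+Y}(m) = ∑ₖ (1-p) pᵏ F_X(m-k)`; splitting off the term `k = 0` and reindexing the rest
gives the shift identity `F_{X+Y}(m) = (1-p) F_X(m) + p F_{X+Y}(m-1)` at every integer `m`.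
Applying it once for `Y₂` and once for `Y₁` and eliminating `F_{W+Y₁}` yields the formula.
-/

namespace ProbabilityTheory

variable {Ω : Type*} [MeasurableSpace Ω] {P : Measure Ω}

/-- Integer thresholds build in the convention `P(X ≤ m) = 0` for `m < 0`, which lets the shift
identity below hold at every `m` without case analysis. -/
noncomputable def intCdf (P : Measure Ω) (X : Ω → ℕ) (m : ℤ) : ℝ :=
  (P {x | (X x : ℤ) ≤ m}).toReal

lemma measure_add_le_eq_tsum {X Y : Ω → ℕ} (hX : Measurable X) (hY : Measurable Y)
    (hXY : IndepFun X Y P) (m : ℤ) :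
    P {x | ((X x + Y x : ℕ) : ℤ) ≤ m}
      = ∑' k : ℕ, P {x | Y x = k} * P {x | (X x : ℤ) ≤ m - k} := by
  have hdecomp : {x | ((X x + Y x : ℕ) : ℤ) ≤ m}
      = ⋃ k : ℕ, {x | (X x : ℤ) ≤ m - k} ∩ {x | Y x = k} := by
    ext x
    simp only [Set.mem_ofPred_eq, Set.mem_iUnion, Set.mem_inter_iff]
    constructor
    · intro h
      exact ⟨Y x, by omega, rfl⟩
    · rintro ⟨k, h, rfl⟩
      omega
  rw [hdecomp, measure_iUnion]
  · refine tsum_congr fun k => ?_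
    rw [mul_comm]
    exact hXY.measure_inter_preimage_eq_mul {n : ℕ | (n : ℤ) ≤ m - k} {k}
      (.of_discrete) (.of_discrete)
  · intro j k hjk
    exact Set.disjoint_left.2 fun x hj hk => hjk (hj.2.symm.trans hk.2)
  · exact fun k => (hX (.of_discrete (s := {n : ℕ | (n : ℤ) ≤ m - k}))).inter
      (hY (measurableSet_singleton k))

lemma measure_add_geom_le {p : ℝ} (hp : 0 ≤ p) {X Y : Ω → ℕ} (hX : Measurable X)
    (hY : Measurable Y) (hXY : IndepFun X Y P) (hYlaw : HasGeomLaw P Y p) (m : ℤ) :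
    P {x | ((X x + Y x : ℕ) : ℤ) ≤ m}
      = ENNReal.ofReal (1 - p) * P {x | (X x : ℤ) ≤ m}
        + ENNReal.ofReal p * P {x | ((X x + Y x : ℕ) : ℤ) ≤ m - 1} := by
  have hshift : ∀ k : ℕ, P {x | Y x = k + 1} * P {x | (X x : ℤ) ≤ m - (k + 1 : ℕ)}
      = ENNReal.ofReal p * (P {x | Y x = k} * P {x | (X x : ℤ) ≤ m - 1 - k}) := by
    intro k
    have hpow : (1 - p) * p ^ (k + 1) = p * ((1 - p) * p ^ k) := by ring
    rw [hYlaw, hYlaw, hpow, ENNReal.ofReal_mul hp, mul_assoc, Nat.cast_succ,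
      sub_add_eq_sub_sub_swap]
  rw [measure_add_le_eq_tsum hX hY hXY, measure_add_le_eq_tsum hX hY hXY,
    tsum_eq_zero_add' ENNReal.summable, hYlaw 0]
  simp_rw [hshift, ENNReal.tsum_mul_left]
  simp

lemma intCdf_add_geom {p : ℝ} (hp : p ∈ Set.Icc 0 1) {X Y : Ω → ℕ} [IsFiniteMeasure P]
    (hX : Measurable X) (hY : Measurable Y) (hXY : IndepFun X Y P) (hYlaw : HasGeomLaw P Y p)
    (m : ℤ) :
    intCdf P (X + Y) m = (1 - p) * intCdf P X m + p * intCdf P (X + Y) (m - 1) := by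
  simp only [intCdf, Pi.add_apply]
  rw [measure_add_geom_le hp.1 hX hY hXY hYlaw, ENNReal.toReal_add (by finiteness)
    (by finiteness), ENNReal.toReal_mul, ENNReal.toReal_mul, ENNReal.toReal_ofReal hp.1,
    ENNReal.toReal_ofReal (sub_nonneg.2 hp.2)]

end ProbabilityTheory

theorem shift_argument_two_geometrics_general
    {Ω : Type*} [MeasurableSpace Ω] (P : Measure Ω) [IsProbabilityMeasure P]
    (a b : ℝ) (ha : a ∈ Set.Ioo (0 : ℝ) 1) (hb : b ∈ Set.Ioo (0 : ℝ) 1)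
    (W Y₁ Y₂ : Ω → ℕ)
    (hW : Measurable W) (hY₁ : Measurable Y₁) (hY₂ : Measurable Y₂)
    (hindep : iIndepFun ![W, Y₁, Y₂] P)
    (hY₁law : HasGeomLaw P Y₁ a) (hY₂law : HasGeomLaw P Y₂ b)
    (d : ℤ) :
    (P {x | (W x : ℤ) ≤ d}).toReal =
      ((P {x | ((W x + Y₁ x + Y₂ x : ℕ) : ℤ) ≤ d}).toReal
        - (a + b) * (P {x | ((W x + Y₁ x + Y₂ x : ℕ) : ℤ) ≤ d - 1}).toReal
        + a * b * (P {x | ((W x + Y₁ x + Y₂ x : ℕ) : ℤ) ≤ d - 2}).toReal)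
      / ((1 - a) * (1 - b)) := by
  change intCdf P W d = (intCdf P (W + Y₁ + Y₂) d - (a + b) * intCdf P (W + Y₁ + Y₂) (d - 1)
    + a * b * intCdf P (W + Y₁ + Y₂) (d - 2)) / ((1 - a) * (1 - b))
  have hmeas : ∀ i, Measurable (![W, Y₁, Y₂] i) := fun i => by fin_cases i <;> assumption
  have hW_Y₁ : IndepFun W Y₁ P := hindep.indepFun (i := 0) (j := 1) (by decide)
  have hWY₁_Y₂ : IndepFun (W + Y₁) Y₂ P :=
    hindep.indepFun_add_left hmeas 0 1 2 (by decide) (by decide)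
  have hF₁ := intCdf_add_geom (Set.Ioo_subset_Icc_self ha) hW hY₁ hW_Y₁ hY₁law
  have hF₂ := intCdf_add_geom (Set.Ioo_subset_Icc_self hb) (hW.add hY₁) hY₂ hWY₁_Y₂ hY₂law
  have hd₂ : d - 2 = d - 1 - 1 := by ring
  rw [eq_div_iff (mul_ne_zero (sub_ne_zero.2 ha.2.ne') (sub_ne_zero.2 hb.2.ne')), hd₂,
    hF₂ d, hF₂ (d - 1), hF₁ d, hF₁ (d - 1)]
  ring

/-- **Two-parameter shift argument.** If `W` is `ℤ_{≥0}`-valued and `Y₁ ~ Geom(a)`,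
`Y₂ ~ Geom(b)` with `W, Y₁, Y₂` mutually independent, then with `L = W + Y₁ + Y₂`,
for every integer `d ≥ 0`,
`P(W ≤ d) = (P(L ≤ d) − (a+b)·P(L ≤ d−1) + ab·P(L ≤ d−2)) / ((1−a)(1−b))`. -/
theorem shift_argument_two_geometrics
    {Ω : Type*} [MeasurableSpace Ω] (P : Measure Ω) [IsProbabilityMeasure P]
    (a b : ℝ) (ha : a ∈ Set.Ioo (0 : ℝ) 1) (hb : b ∈ Set.Ioo (0 : ℝ) 1)
    (W Y₁ Y₂ : Ω → ℕ)
    (hW : Measurable W) (hY₁ : Measurable Y₁) (hY₂ : Measurable Y₂)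
    (hindep : iIndepFun ![W, Y₁, Y₂] P)
    (hY₁law : HasGeomLaw P Y₁ a) (hY₂law : HasGeomLaw P Y₂ b)
    (d : ℤ) (hd : 0 ≤ d) :
    (P {x | (W x : ℤ) ≤ d}).toReal =
      ((P {x | ((W x + Y₁ x + Y₂ x : ℕ) : ℤ) ≤ d}).toReal
        - (a + b) * (P {x | ((W x + Y₁ x + Y₂ x : ℕ) : ℤ) ≤ d - 1}).toReal
        + a * b * (P {x | ((W x + Y₁ x + Y₂ x : ℕ) : ℤ) ≤ d - 2}).toReal)
      / ((1 - a) * (1 - b)) :=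
  shift_argument_two_geometrics_general P a b ha hb W Y₁ Y₂ hW hY₁ hY₂ hindep hY₁law hY₂law d
end

section
/- Let r ∈ (0,1) and let ρ be a real number with r < ρ < 1/r. Then for every integer m, the contour integral (1/(2πi)) ∮_{|z|=ρ} z^{m−1}(1−z²)/((z−r)(1−rz)) dz over the positively oriented circle of radius ρ centered at 0 equals sgn(m)·r^{|m|−1}; that is, it equals r^{m−1} if m ≥ 1, equals 0 if m = 0, and equals −r^{−m−1} if m ≤ −1. -/
/-!
Partial fractions split the integrand into
`z^(m-1)/(z-r) + r⁻² z^(m-1)/(z-r⁻¹) + r⁻¹ z^(m-1)`, with one pole inside the circle and one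
outside. For a point `a` off the circle, `I k = ∮ (z-c)^k/(z-a)` satisfies
`I (k+1) = (a-c) I k + ∮ (z-c)^k`, since `(z-c)^(k+1) = (z-c)^k ((z-a) + (a-c))`; so `I` is
determined on all of `ℤ` by `I 0`, which is `2πi` for `a` inside and `0` for `a` outside.
-/

open Complex Metric Real

theorem Int.eq_of_forall_add_one_eq_mul_add {α : Type*} [Ring α] [NoZeroDivisors α]
    {f g b : ℤ → α} {a : α} (hf : ∀ k, f (k + 1) = a * f k + b k)
    (hg : ∀ k, g (k + 1) = a * g k + b k) (h0 : f 0 = g 0) : f = g := by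
  have hD (k : ℤ) : f (k + 1) - g (k + 1) = a * (f k - g k) := by
    rw [hf, hg, mul_sub, add_sub_add_right_eq_sub]
  funext k
  rw [← sub_eq_zero]
  rcases eq_or_ne a 0 with rfl | ha
  · simpa using hD (k - 1)
  induction k using Int.induction_on with
  | zero => rw [h0, sub_self]
  | succ k ih => rw [hD, ih, mul_zero]
  | pred k ih =>
    have := hD (-(k : ℤ) - 1)
    rw [sub_add_cancel, ih] at this
    exact (mul_eq_zero.mp this.symm).resolve_left ha

theorem one_sub_sq_div_eq_partial_fractions {K : Type*} [Field K] {r z : K} (hr : r ≠ 0)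
    (hzr : z ≠ r) (hrz : r * z ≠ 1) :
    (1 - z ^ 2) / ((z - r) * (1 - r * z)) =
      (z - r)⁻¹ + r⁻¹ ^ 2 * (z - r⁻¹)⁻¹ + r⁻¹ := by
  -- the denominators in the forms `field_simp` produces
  have := sub_ne_zero.mpr hzr
  have : 1 - z * r ≠ 0 := sub_ne_zero.mpr (mul_comm r z ▸ hrz.symm)
  have : z * r - 1 ≠ 0 := sub_ne_zero.mpr (mul_comm r z ▸ hrz)
  field_simp
  ring

namespace circleIntegral

variable {c a : ℂ} {R : ℝ}

theorem integral_sub_center_zpow (hR : R ≠ 0) (k : ℤ) :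
    (∮ z in C(c, R), (z - c) ^ k) = if k = -1 then 2 * π * I else 0 := by
  split_ifs with hk
  · simp [hk, integral_sub_center_inv c hR]
  · exact integral_sub_zpow_of_ne hk c c R

theorem circleIntegrable_sub_center_zpow (hR : R ≠ 0) (k : ℤ) :
    CircleIntegrable (fun z => (z - c) ^ k) c R :=
  circleIntegrable_sub_zpow_iff.mpr (Or.inr (Or.inr (by simpa using (abs_pos.mpr hR).ne)))

theorem circleIntegrable_sub_zpow_mul_sub_inv (hR : 0 < R) (ha : ‖a - c‖ ≠ R) (k : ℤ) :
    CircleIntegrable (fun z => (z - c) ^ k * (z - a)⁻¹) c R := by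
  refine ContinuousOn.circleIntegrable hR.le <|
    ((continuousOn_id.sub continuousOn_const).zpow₀ k fun z hz => Or.inl ?_).mul
    ((continuousOn_id.sub continuousOn_const).inv₀ fun z hz => ?_) <;>
  simp only [Pi.sub_apply, id, sub_ne_zero] <;> rintro rfl
  · simp [hR.ne] at hz
  · exact ha (mem_sphere_iff_norm.mp hz)

theorem integral_sub_zpow_add_one_mul_sub_inv (hR : 0 < R) (ha : ‖a - c‖ ≠ R) (k : ℤ) :
    (∮ z in C(c, R), (z - c) ^ (k + 1) * (z - a)⁻¹) =
      (a - c) * (∮ z in C(c, R), (z - c) ^ k * (z - a)⁻¹) + ∮ z in C(c, R), (z - c) ^ k := by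
  have hmul : CircleIntegrable (fun z => (a - c) * ((z - c) ^ k * (z - a)⁻¹)) c R :=
    (circleIntegrable_sub_zpow_mul_sub_inv hR ha k).const_smul
  rw [← integral_const_mul, ← integral_add hmul (circleIntegrable_sub_center_zpow hR.ne' k)]
  refine integral_congr hR.le fun z hz => ?_
  have hzc : z - c ≠ 0 := by
    rw [sub_ne_zero]; rintro rfl; simp [hR.ne] at hz
  have hza : z - a ≠ 0 := by
    rw [sub_ne_zero]; rintro rfl; exact ha (mem_sphere_iff_norm.mp hz)
  rw [zpow_add_one₀ hzc]
  field_simp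
  ring

theorem integral_sub_zpow_mul_sub_inv_of_mem_ball (ha : a ∈ ball c R) (k : ℤ) :
    (∮ z in C(c, R), (z - c) ^ k * (z - a)⁻¹) =
      if 0 ≤ k then 2 * π * I * (a - c) ^ k else 0 := by
  have hR : 0 < R := dist_nonneg.trans_lt ha
  have haR : ‖a - c‖ ≠ R := (mem_ball_iff_norm.mp ha).ne
  revert k
  refine funext_iff.mp (Int.eq_of_forall_add_one_eq_mul_add
    (integral_sub_zpow_add_one_mul_sub_inv hR haR) (fun k => ?_) ?_)
  · rw [integral_sub_center_zpow hR.ne']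
    rcases lt_trichotomy k (-1) with hk | rfl | hk
    · simp [hk.ne, show ¬0 ≤ k + 1 by omega, show ¬0 ≤ k by omega]
    · simp
    · rw [if_pos (by omega), if_pos (by omega), if_neg (by omega),
        zpow_add' (Or.inr (Or.inl (by omega))), zpow_one]
      ring
  · simp [integral_sub_inv_of_mem_ball ha]

theorem integral_sub_zpow_mul_sub_inv_of_notMem_closedBall (hR : 0 < R)
    (ha : a ∉ closedBall c R) (k : ℤ) :
    (∮ z in C(c, R), (z - c) ^ k * (z - a)⁻¹) =
      if 0 ≤ k then 0 else -(2 * π * I * (a - c) ^ k) := by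
  have haR : R < ‖a - c‖ := not_le.mp (mt mem_closedBall_iff_norm.mpr ha)
  have hac : a - c ≠ 0 := norm_pos_iff.mp (hR.trans haR)
  revert k
  refine funext_iff.mp (Int.eq_of_forall_add_one_eq_mul_add
    (integral_sub_zpow_add_one_mul_sub_inv hR haR.ne') (fun k => ?_) ?_)
  · rw [integral_sub_center_zpow hR.ne', zpow_add_one₀ hac]
    rcases lt_trichotomy k (-1) with hk | rfl | hk
    · rw [if_neg (by omega), if_neg (by omega), if_neg hk.ne, add_zero]
      ring
    · simp [mul_left_comm (a - c), hac]
    · simp [show k ≠ -1 by omega, show 0 ≤ k + 1 by omega, show 0 ≤ k by omega]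
  · have hd : DiffContOnCl ℂ (fun z => (z - a)⁻¹) (ball c R) := by
      refine ((differentiable_id.sub_const a).differentiableOn.inv
        fun z hz => ?_).diffContOnCl
      rw [closure_ball c hR.ne'] at hz
      exact sub_ne_zero.mpr (ne_of_mem_of_not_mem hz ha)
    simp [hd.circleIntegral_eq_zero hR.le]

theorem integral_zpow_mul_one_sub_sq_div_eq (hR : 0 < R) (ha : a ≠ 0) (haR : ‖a‖ ≠ R)
    (haR' : ‖a⁻¹‖ ≠ R) (k : ℤ) :
    (∮ z in C(0, R), z ^ k * (1 - z ^ 2) / ((z - a) * (1 - a * z))) =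
      (∮ z in C(0, R), z ^ k * (z - a)⁻¹) +
        (a⁻¹ ^ 2 * (∮ z in C(0, R), z ^ k * (z - a⁻¹)⁻¹) + a⁻¹ * ∮ z in C(0, R), z ^ k) := by
  have hpole : CircleIntegrable (fun z => z ^ k * (z - a)⁻¹) 0 R := by
    simpa using circleIntegrable_sub_zpow_mul_sub_inv (c := 0) hR (by rwa [sub_zero]) k
  have hpole' : CircleIntegrable (fun z => z ^ k * (z - a⁻¹)⁻¹) 0 R := by
    simpa using circleIntegrable_sub_zpow_mul_sub_inv (c := 0) hR (by rwa [sub_zero]) k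
  have hpow : CircleIntegrable (fun z => z ^ k) 0 R := by
    simpa using circleIntegrable_sub_center_zpow (c := 0) hR.ne' k
  have hpole'' : CircleIntegrable (fun z => a⁻¹ ^ 2 * (z ^ k * (z - a⁻¹)⁻¹)) 0 R :=
    hpole'.const_smul
  have hpow' : CircleIntegrable (fun z => a⁻¹ * z ^ k) 0 R := hpow.const_smul
  rw [← integral_const_mul, ← integral_const_mul, ← integral_add hpole'' hpow',
    ← integral_add (g := fun z => _ + _) hpole (hpole''.add hpow')]
  refine integral_congr hR.le fun z hz => ?_
  have hz : ‖z‖ = R := by simpa using hz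
  have hza : z ≠ a := by
    rintro rfl
    exact haR hz
  have haz : a * z ≠ 1 := fun h => haR' (eq_inv_of_mul_eq_one_right h ▸ hz)
  rw [mul_div_assoc, one_sub_sq_div_eq_partial_fractions ha hza haz]
  ring

theorem integral_zpow_mul_one_sub_sq_div (haR : a ∈ ball 0 R) (haR' : a⁻¹ ∉ closedBall 0 R)
    (m : ℤ) :
    (∮ z in C(0, R), z ^ (m - 1) * (1 - z ^ 2) / ((z - a) * (1 - a * z))) =
      2 * π * I * (m.sign * a ^ (|m| - 1)) := by
  have hR : 0 < R := dist_nonneg.trans_lt haR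
  have ha : a ≠ 0 := by
    rintro rfl
    exact haR' (by simpa using hR.le)
  have hin := integral_sub_zpow_mul_sub_inv_of_mem_ball haR (m - 1)
  have hout := integral_sub_zpow_mul_sub_inv_of_notMem_closedBall hR haR' (m - 1)
  have hpow := integral_sub_center_zpow (c := 0) hR.ne' (m - 1)
  simp only [sub_zero] at hin hout hpow
  rw [integral_zpow_mul_one_sub_sq_div_eq hR ha (mem_ball_zero_iff.mp haR).ne
    (not_le.mp (mt mem_closedBall_zero_iff.mpr haR')).ne', hin, hout, hpow]
  rcases lt_trichotomy m 0 with hm | rfl | hm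
  · rw [if_neg (by omega), if_neg (by omega), if_neg (by omega), Int.sign_eq_neg_one_of_neg hm,
      abs_of_neg hm, inv_zpow', show -(m - 1) = -m - 1 + 2 by ring, zpow_add₀ ha]
    field_simp
    push_cast
    ring
  · rw [if_neg (by norm_num), if_neg (by norm_num), if_pos (by norm_num), Int.sign_zero,
      Int.cast_zero, zero_mul, mul_zero, zero_sub, zpow_neg_one, inv_inv]
    field_simp
    ring
  · rw [if_pos (by omega), if_pos (by omega), if_neg (by omega), Int.sign_eq_one_of_pos hm,
      abs_of_pos hm]
    simp

end circleIntegral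

/-- **Contour-integral evaluation of the kernel entry `E`.** For `0 < r < 1` and a radius
`ρ ∈ (r, 1/r)`, the integral `(2πi)⁻¹ ∮_{|z|=ρ} z^{m−1}(1−z²)/((z−r)(1−rz)) dz` equals
`sgn(m)·r^{|m|−1}` for every integer `m`. -/
theorem contour_integral_kernel_E
    (r ρ : ℝ) (hr : r ∈ Set.Ioo (0 : ℝ) 1) (hρ₁ : r < ρ) (hρ₂ : ρ < 1 / r) (m : ℤ) :
    (1 / (2 * Real.pi * Complex.I)) *
        (∮ z in C(0, ρ), z ^ (m - 1) * (1 - z ^ 2) / ((z - (r : ℂ)) * (1 - (r : ℂ) * z))) =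
      (m.sign : ℂ) * (r : ℂ) ^ (|m| - 1) := by
  have hr0 : 0 < r := hr.1
  have hin : (r : ℂ) ∈ ball (0 : ℂ) ρ := by simpa [abs_of_pos hr0] using hρ₁
  have hout : (r : ℂ)⁻¹ ∉ closedBall (0 : ℂ) ρ := by
    simpa [abs_of_pos hr0, one_div] using hρ₂
  rw [circleIntegral.integral_zpow_mul_one_sub_sq_div hin hout, ← mul_assoc,
    one_div_mul_cancel two_pi_I_ne_zero, one_mul]
end

section
/- Let t, s, r > 0 with ts < 1, tr < 1 and sr < 1, and let d be a nonnegative integer. Then the double series Σ_{k=d+1}^{∞} Σ_{ℓ=d+1}^{∞} sgn(k−ℓ)·r^{|k−ℓ|−1}·t^{k+1}·s^{ℓ+1} converges absolutely and its sum equals (t−s)·(ts)^{d+2} / ((1−ts)(1−tr)(1−sr)). -/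
/-!
Writing `E(k, ℓ) = K(k, ℓ) - K(ℓ, k)` with `K(k, ℓ) = r^(k-ℓ-1)` on the strict lower triangle
`ℓ < k` (and `0` elsewhere), the substitution `k = i + j + 1, ℓ = i` turns the `K`-part into a
product of two geometric series, `t · Σ (ts)^i · Σ (tr)^j = t / ((1 - ts)(1 - tr))`, and the
transposed part into `s / ((1 - ts)(1 - sr))`. Their difference is
`(t - s) / ((1 - ts)(1 - tr)(1 - sr))`, and the offset `d + 1` in both indices only contributes
the factor `(ts)^(d+2)`.
-/

theorem hasSum_strictLower_iff {α : Type*} [AddCommMonoid α] [TopologicalSpace α]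
    {f : ℕ × ℕ → α} (hf : ∀ p : ℕ × ℕ, p.1 ≤ p.2 → f p = 0) {a : α} :
    HasSum (fun q : ℕ × ℕ => f (q.1 + q.2 + 1, q.1)) a ↔ HasSum f a := by
  refine Function.Injective.hasSum_iff (fun q q' h => ?_) fun p hp => hf p ?_
  · simp only [Prod.mk.injEq] at h
    exact Prod.ext h.2 (by omega)
  · by_contra! hlt
    exact hp ⟨(p.2, p.1 - p.2 - 1), by ext <;> simp only; omega⟩

section GeometricKernel

variable {𝕜 : Type*} [NormedField 𝕜]

def strictLowerGeomKernel (t s r : 𝕜) (p : ℕ × ℕ) : 𝕜 :=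
  if p.2 < p.1 then r ^ (p.1 - p.2 - 1) * t ^ p.1 * s ^ p.2 else 0

theorem sign_mul_zpow_abs_sub_one_mul_pow_mul_pow (t s r : 𝕜) (k ℓ : ℕ) :
    (((k : ℤ) - ℓ).sign : 𝕜) * r ^ (|(k : ℤ) - ℓ| - 1) * t ^ k * s ^ ℓ =
      strictLowerGeomKernel t s r (k, ℓ) - strictLowerGeomKernel s t r (ℓ, k) := by
  simp only [strictLowerGeomKernel]
  rcases lt_trichotomy k ℓ with h | rfl | h
  · have hneg : (k : ℤ) - ℓ < 0 := by omega
    rw [if_neg (by omega), if_pos h, Int.sign_eq_neg_one_of_neg hneg, abs_of_neg hneg,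
      show -((k : ℤ) - ℓ) - 1 = ((ℓ - k - 1 : ℕ) : ℤ) by omega, zpow_natCast]
    push_cast
    ring
  · simp
  · have hpos : 0 < (k : ℤ) - ℓ := by omega
    rw [if_pos h, if_neg (by omega), Int.sign_eq_one_of_pos hpos, abs_of_pos hpos,
      show (k : ℤ) - ℓ - 1 = ((k - ℓ - 1 : ℕ) : ℤ) by omega, zpow_natCast]
    push_cast
    ring

variable [CompleteSpace 𝕜]

theorem hasSum_geometric_mul_geometric {x y : 𝕜} (hx : ‖x‖ < 1) (hy : ‖y‖ < 1) :
    HasSum (fun p : ℕ × ℕ => x ^ p.1 * y ^ p.2) ((1 - x)⁻¹ * (1 - y)⁻¹) :=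
  (hasSum_geometric_of_norm_lt_one hx).mul (hasSum_geometric_of_norm_lt_one hy)
    (summable_mul_of_summable_norm (summable_norm_geometric_of_norm_lt_one hx)
      (summable_norm_geometric_of_norm_lt_one hy))

theorem hasSum_strictLowerGeomKernel {t s r : 𝕜} (hts : ‖t * s‖ < 1) (htr : ‖t * r‖ < 1) :
    HasSum (strictLowerGeomKernel t s r) (t * ((1 - t * s)⁻¹ * (1 - t * r)⁻¹)) := by
  refine (hasSum_strictLower_iff fun p hp => if_neg (by omega)).mp
    (((hasSum_geometric_mul_geometric hts htr).mul_left t).congr_fun fun q => ?_)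
  dsimp only [strictLowerGeomKernel]
  rw [if_pos (by omega), show q.1 + q.2 + 1 - q.1 - 1 = q.2 by omega]
  ring

theorem hasSum_sign_mul_zpow_abs_sub_one {t s r : 𝕜}
    (hts : ‖t * s‖ < 1) (htr : ‖t * r‖ < 1) (hsr : ‖s * r‖ < 1) :
    HasSum (fun p : ℕ × ℕ =>
        (((p.1 : ℤ) - p.2).sign : 𝕜) * r ^ (|(p.1 : ℤ) - p.2| - 1) * t ^ p.1 * s ^ p.2)
      ((t - s) / ((1 - t * s) * (1 - t * r) * (1 - s * r))) := by
  have one_sub_ne_zero {x : 𝕜} (hx : ‖x‖ < 1) : 1 - x ≠ 0 :=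
    (isUnit_one_sub_of_norm_lt_one hx).ne_zero
  have lower := hasSum_strictLowerGeomKernel hts htr
  have upper := (Equiv.prodComm ℕ ℕ).hasSum_iff.mpr
    (hasSum_strictLowerGeomKernel (by rwa [mul_comm]) hsr)
  have value : (t - s) / ((1 - t * s) * (1 - t * r) * (1 - s * r)) =
      t * ((1 - t * s)⁻¹ * (1 - t * r)⁻¹) - s * ((1 - s * t)⁻¹ * (1 - s * r)⁻¹) := by
    rw [mul_comm s t]
    field_simp [one_sub_ne_zero hts, one_sub_ne_zero htr, one_sub_ne_zero hsr]
    ring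
  rw [value]
  exact (lower.sub upper).congr_fun fun p =>
    sign_mul_zpow_abs_sub_one_mul_pow_mul_pow t s r p.1 p.2

end GeometricKernel

/-- **Evaluation of the pairing `⟨f^t|E|f^s⟩`.** For `t, s, r > 0` with `ts < 1`, `tr < 1`,
`sr < 1` and any integer `d ≥ 0`, the double series
`Σ_{k=d+1}^∞ Σ_{ℓ=d+1}^∞ sgn(k−ℓ)·r^{|k−ℓ|−1}·t^{k+1}·s^{ℓ+1}`
converges absolutely (for real series, `HasSum` over `ℕ × ℕ` is unconditional, hence
absolute, convergence) with sum `(t−s)·(ts)^{d+2}/((1−ts)(1−tr)(1−sr))`. -/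
theorem double_series_fE_pairing
    (t s r : ℝ) (ht : 0 < t) (hs : 0 < s) (hr : 0 < r)
    (hts : t * s < 1) (htr : t * r < 1) (hsr : s * r < 1) (d : ℕ) :
    HasSum
      (fun p : ℕ × ℕ =>
        (((d + 1 + p.1 : ℤ) - (d + 1 + p.2 : ℤ)).sign : ℝ) *
          r ^ (|(d + 1 + p.1 : ℤ) - (d + 1 + p.2 : ℤ)| - 1) *
          t ^ (d + 1 + p.1 + 1) * s ^ (d + 1 + p.2 + 1))
      ((t - s) * (t * s) ^ (d + 2) / ((1 - t * s) * (1 - t * r) * (1 - s * r))) := by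
  have norm_lt_one {x : ℝ} (hx0 : 0 < x) (hx1 : x < 1) : ‖x‖ < 1 := by
    rwa [Real.norm_of_nonneg hx0.le]
  have core := (hasSum_sign_mul_zpow_abs_sub_one (norm_lt_one (by positivity) hts)
    (norm_lt_one (by positivity) htr) (norm_lt_one (by positivity) hsr)).mul_left
    ((t * s) ^ (d + 2))
  rw [mul_comm (t - s), mul_div_assoc]
  refine core.congr_fun fun p => ?_
  rw [show ((d : ℤ) + 1 + p.1) - (d + 1 + p.2) = (p.1 : ℤ) - p.2 by ring]
  ring
end

section
/- Let r, s > 0 with rs < 1 and r ≠ s, and let d, k be integers with k ≥ d+1 ≥ 1. Then the series Σ_{ℓ=d+1}^{∞} sgn(k−ℓ)·r^{|k−ℓ|−1}·s^{ℓ} converges absolutely and its sum equals (s^{d+1}·r^{k−d−1} − s^{k})/(r−s) − s^{k+1}/(1−rs). -/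
/-!
Write `k = d + 1 + m` and factor out `s ^ (d + 1)`. The terms with `ℓ < k` form the finite
geometric sum `∑_{j < m} s ^ j r ^ (m - 1 - j) = (r ^ m - s ^ m) / (r - s)`, the term `ℓ = k`
vanishes, and the terms with `ℓ > k` form the geometric series `-s ^ (k + 1) ∑ᵢ (r s) ^ i`.
-/

open Finset

/-- `signedPow r (k - ℓ) = -E(k, ℓ)`; at `n = 0` the junk exponent `-1` is killed by the sign. -/
def signedPow {K : Type*} [DivisionRing K] (r : K) (n : ℤ) : K :=
  (n.sign : K) * r ^ (|n| - 1)

section signedPow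

variable {K : Type*} [DivisionRing K] (r : K)

@[simp]
lemma signedPow_zero : signedPow r 0 = 0 := by
  simp [signedPow]

lemma signedPow_natCast_add_one (n : ℕ) : signedPow r (n + 1) = r ^ n := by
  have hpos : (0 : ℤ) < n + 1 := by omega
  rw [signedPow, Int.sign_eq_one_of_pos hpos, abs_of_pos hpos, add_sub_cancel_right, zpow_natCast,
    Int.cast_one, one_mul]

lemma signedPow_neg (n : ℤ) : signedPow r (-n) = -signedPow r n := by
  simp [signedPow]

end signedPow

section Geometric

variable {K : Type*} [NormedField K] {r s : K}

lemma sum_range_signedPow_mul_pow (hne : r ≠ s) (m : ℕ) :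
    ∑ j ∈ range (m + 1), signedPow r (m - j) * s ^ j = (r ^ m - s ^ m) / (r - s) := by
  have hterm : ∀ j ∈ range m, signedPow r (m - j) * s ^ j = s ^ j * r ^ (m - 1 - j) := by
    intro j hj
    have hjm := mem_range.mp hj
    rw [show (m : ℤ) - j = ((m - 1 - j : ℕ) : ℤ) + 1 by omega, signedPow_natCast_add_one, mul_comm]
  rw [sum_range_succ, sub_self, signedPow_zero, zero_mul, add_zero, sum_congr rfl hterm,
    geom_sum₂_comm, geom₂_sum hne]

lemma hasSum_signedPow_mul_pow [CompleteSpace K] (hrs : ‖r * s‖ < 1) (hne : r ≠ s) (m : ℕ) :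
    HasSum (fun j : ℕ => signedPow r (m - j) * s ^ j)
      ((r ^ m - s ^ m) / (r - s) - s ^ (m + 1) / (1 - r * s)) := by
  have htail : HasSum (fun i : ℕ => signedPow r (m - ↑(i + (m + 1))) * s ^ (i + (m + 1)))
      (-(s ^ (m + 1) * (1 - r * s)⁻¹)) := by
    have hgeom := ((hasSum_geometric_of_norm_lt_one hrs).mul_left (s ^ (m + 1))).neg
    refine hgeom.congr_fun fun i => ?_
    rw [show (m : ℤ) - ↑(i + (m + 1)) = -((i : ℤ) + 1) by push_cast; ring, signedPow_neg,
      signedPow_natCast_add_one, mul_pow, pow_add]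
    ring
  rw [div_eq_mul_inv _ (1 - r * s), sub_eq_neg_add, ← sum_range_signedPow_mul_pow hne m]
  exact (hasSum_nat_add_iff (m + 1)).mp htail

end Geometric

/-- **Action of the kernel `E` on a geometric function.** For `r, s > 0` with `rs < 1` and
`r ≠ s`, and integers `k ≥ d+1 ≥ 1`, the series `Σ_{ℓ=d+1}^∞ sgn(k−ℓ)·r^{|k−ℓ|−1}·s^ℓ`
converges absolutely (in `ℝ`, `HasSum` is unconditional, hence absolute, convergence)
with sum `(s^{d+1}·r^{k−d−1} − s^k)/(r−s) − s^{k+1}/(1−rs)`. -/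
theorem series_E_on_geometric
    (r s : ℝ) (hr : 0 < r) (hs : 0 < s) (hrs : r * s < 1) (hne : r ≠ s)
    (d k : ℕ) (hk : d + 1 ≤ k) :
    HasSum
      (fun j : ℕ =>
        (((k : ℤ) - (d + 1 + j : ℤ)).sign : ℝ) *
          r ^ (|(k : ℤ) - (d + 1 + j : ℤ)| - 1) * s ^ (d + 1 + j))
      ((s ^ (d + 1) * r ^ (k - d - 1) - s ^ k) / (r - s) - s ^ (k + 1) / (1 - r * s)) := by
  obtain ⟨m, rfl⟩ := Nat.exists_eq_add_of_le hk
  have hnorm : ‖r * s‖ < 1 := by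
    rwa [Real.norm_of_nonneg (by positivity)]
  convert (hasSum_signedPow_mul_pow hnorm hne m).mul_left (s ^ (d + 1)) using 2 with j
  · rfl -- the `AddCommMonoid ℝ` instances of the two sides differ only up to unfolding
  · change signedPow r _ * _ = _
    rw [show ((d + 1 + m : ℕ) : ℤ) - (d + 1 + j) = m - j by push_cast; ring, pow_add]
    ring
  · rw [show d + 1 + m - d - 1 = m by omega]
    ring
end

section
/- Fix q̂ ∈ (0,1), an integer N ≥ 2, an integer d ≥ 0, s ∈ (q̂, 1), and r ∈ (0,1/s) with r ≠ s. For x ∈ (q̂, 1/q̂) define H(x) = ((1−q̂/x)/(1−q̂x))^{N−2}. Then, as t tends to 1/s through values t ∈ (q̂, 1/q̂) with t ≠ 1/s, the function Φ(t) = (1/(1−st)) · ( 1 + ( 1 + (1−t²)(1−sr)/((t−s)(t−r)) − (1−tr)(1−s²)/((t−s)(s−r)) ) · (ts)^{d+2}/(H(t)H(s)) ) converges to the limit (d+2) − (N−2)·q̂·(1/s + s − 2q̂)/((1−q̂/s)(1−q̂s)) − (1−r²)·s/((s−r)(1−sr)). -/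
/-!
Write the numerator as `1 + B(t) W(t)`, with `B` the bracket and `W(t) = (ts)^{d+2}/(H(t)H(s))`.
The bracket collapses to `B(t) = -(1-sr)(1-rt)/((s-r)(t-r))`, so `B(1/s) = -1` and `1 + B(t)` is
exactly divisible by `1 - st`: it contributes the last term of the limit with no limiting process.
Since `H(1/x) = H(x)⁻¹` we have `W(1/s) = 1`, so the rest, `B(t) (W(t) - 1)/(1 - st)`, is a
difference quotient of `W` at `1/s`; the logarithmic derivative of `H` produces the other terms.
-/

open Filter Topology

theorem tendsto_div_nhdsNE_of_hasDerivAt {𝕜 : Type*} [NontriviallyNormedField 𝕜]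
    {f g : 𝕜 → 𝕜} {f' g' c : 𝕜} (hf : HasDerivAt f f' c) (hg : HasDerivAt g g' c)
    (hfc : f c = 0) (hgc : g c = 0) (hg' : g' ≠ 0) :
    Tendsto (fun t => f t / g t) (𝓝[≠] c) (𝓝 (f' / g')) := by
  refine ((hasDerivAt_iff_tendsto_slope.mp hf).div
    (hasDerivAt_iff_tendsto_slope.mp hg) hg').congr' ?_
  filter_upwards [self_mem_nhdsWithin] with t ht
  rw [Pi.div_apply, slope_def_field, slope_def_field, hfc, hgc, sub_zero, sub_zero,
    div_div_div_cancel_right₀ (sub_ne_zero.mpr ht)]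

theorem HasDerivAt.pow_of_eq_one {𝕜 : Type*} [NontriviallyNormedField 𝕜] {u : 𝕜 → 𝕜}
    {u' c : 𝕜} (hu : HasDerivAt u u' c) (huc : u c = 1) (n : ℕ) :
    HasDerivAt (fun t => u t ^ n) (n * u') c := by
  simpa [huc] using hu.fun_pow n

/-- `H(x) = qRatio q̂ x ^ (N - 2)`. -/
noncomputable def qRatio (q x : ℝ) : ℝ := (1 - q / x) / (1 - q * x)

theorem qRatio_inv (q x : ℝ) : qRatio q x⁻¹ = (qRatio q x)⁻¹ := by
  rw [qRatio, qRatio, div_inv_eq_mul, ← div_eq_mul_inv, inv_div]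

theorem hasDerivAt_qRatio {q x : ℝ} (hx : x ≠ 0) (hxq : x ≠ q) (hqx : q * x ≠ 1) :
    HasDerivAt (qRatio q) (qRatio q x * (q / (x * (x - q)) + q / (1 - q * x))) x := by
  have hu : HasDerivAt (fun t => 1 - q / t) (q / x ^ 2) x := by
    simpa [div_eq_mul_inv] using ((hasDerivAt_inv hx).const_mul q).const_sub 1
  have hv : HasDerivAt (fun t => 1 - q * t) (-q) x := by
    simpa using ((hasDerivAt_id x).const_mul q).const_sub 1
  have : x - q ≠ 0 := sub_ne_zero.mpr hxq
  have : 1 - q * x ≠ 0 := sub_ne_zero.mpr hqx.symm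
  refine (hu.fun_div hv this).congr_deriv ?_
  unfold qRatio
  field_simp
  ring

noncomputable def bracket (s r t : ℝ) : ℝ :=
  1 + (1 - t ^ 2) * (1 - s * r) / ((t - s) * (t - r))
    - (1 - t * r) * (1 - s ^ 2) / ((t - s) * (s - r))

section bracket

variable {s r t : ℝ}

theorem bracket_eq (hts : t ≠ s) (htr : t ≠ r) (hsr : s ≠ r) :
    bracket s r t = -((1 - s * r) * (1 - r * t)) / ((s - r) * (t - r)) := by
  have := sub_ne_zero.mpr hts
  have := sub_ne_zero.mpr htr
  have := sub_ne_zero.mpr hsr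
  rw [bracket]
  field_simp
  ring

theorem one_add_bracket_eq (hts : t ≠ s) (htr : t ≠ r) (hsr : s ≠ r) :
    1 + bracket s r t = -((1 - r ^ 2) * (1 - s * t)) / ((s - r) * (t - r)) := by
  have := sub_ne_zero.mpr htr
  have := sub_ne_zero.mpr hsr
  rw [bracket_eq hts htr hsr]
  field_simp
  ring

theorem continuousAt_bracket (hts : t ≠ s) (htr : t ≠ r) (hsr : s ≠ r) :
    ContinuousAt (bracket s r) t := by
  have := sub_ne_zero.mpr hts
  have := sub_ne_zero.mpr htr
  have := sub_ne_zero.mpr hsr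
  unfold bracket
  fun_prop (disch := positivity)

theorem one_div_mul_one_add_bracket_mul {w : ℝ} (hts : t ≠ s) (htr : t ≠ r) (hsr : s ≠ r)
    (hst : 1 - s * t ≠ 0) :
    1 / (1 - s * t) * (1 + bracket s r t * w)
      = -(1 - r ^ 2) / ((s - r) * (t - r)) + bracket s r t * ((w - 1) / (1 - s * t)) := by
  have := sub_ne_zero.mpr htr
  have := sub_ne_zero.mpr hsr
  calc _ = (1 + bracket s r t) / (1 - s * t) + bracket s r t * ((w - 1) / (1 - s * t)) := by
        ring
    _ = _ := by
        rw [one_add_bracket_eq hts htr hsr]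
        field_simp

end bracket

/-- `(ts)^{d+2} / (H(t) H(s))` with `H = qRatio q ^ n`. -/
noncomputable def weight (q : ℝ) (n d : ℕ) (s t : ℝ) : ℝ :=
  (t * s) ^ (d + 2) / (qRatio q t ^ n * qRatio q s ^ n)

section weight

variable {q s : ℝ} (n d : ℕ) (hs0 : s ≠ 0) (hqs : q ≠ s) (hqs' : q * s ≠ 1)
include hs0 hqs hqs'

theorem qRatio_inv_mul_self : qRatio q s⁻¹ * qRatio q s = 1 := by
  have hu : 1 - q / s ≠ 0 := by
    rw [sub_ne_zero, ne_eq, eq_div_iff hs0, one_mul]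
    exact hqs.symm
  rw [qRatio_inv]
  exact inv_mul_cancel₀ (div_ne_zero hu (sub_ne_zero.mpr hqs'.symm))

theorem weight_inv_self : weight q n d s s⁻¹ = 1 := by
  rw [weight, ← mul_pow, qRatio_inv_mul_self hs0 hqs hqs', inv_mul_cancel₀ hs0]
  simp

theorem hasDerivAt_weight :
    HasDerivAt (weight q n d s)
      (s * ((d + 2) - n * q * (s⁻¹ + s - 2 * q) / ((1 - q / s) * (1 - q * s)))) s⁻¹ := by
  have hR := qRatio_inv_mul_self hs0 hqs hqs'
  have hxq : s⁻¹ ≠ q := fun h => hqs' (by rw [← h, inv_mul_cancel₀ hs0])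
  have hqx : q * s⁻¹ ≠ 1 := fun h => hqs (by rw [← mul_inv_eq_one₀ hs0, h])
  have hv : HasDerivAt (fun t => (t * s) ^ (d + 2)) ((d + 2 : ℕ) * (1 * s)) s⁻¹ :=
    ((hasDerivAt_id s⁻¹).mul_const s).pow_of_eq_one (inv_mul_cancel₀ hs0) _
  have hu := ((hasDerivAt_qRatio (inv_ne_zero hs0) hxq hqx).mul_const (qRatio q s)).pow_of_eq_one
    hR n
  have hw : weight q n d s = fun t => (t * s) ^ (d + 2) / (qRatio q t * qRatio q s) ^ n := by
    ext t
    rw [weight, mul_pow (qRatio q t)]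
  rw [hw]
  refine (hv.fun_div hu (by simp [hR])).congr_deriv ?_
  simp only [hR, inv_mul_cancel₀ hs0, one_pow, mul_one, one_mul, div_one,
    mul_right_comm _ _ (qRatio q s)]
  have : s - q ≠ 0 := sub_ne_zero.mpr hqs.symm
  have : 1 - s * q ≠ 0 := by rwa [mul_comm, sub_ne_zero, ne_comm]
  push_cast
  field_simp
  ring

theorem tendsto_weight_sub_one_div :
    Tendsto (fun t => (weight q n d s t - 1) / (1 - s * t)) (𝓝[≠] s⁻¹)
      (𝓝 (n * q * (s⁻¹ + s - 2 * q) / ((1 - q / s) * (1 - q * s)) - (d + 2))) := by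
  have hg : HasDerivAt (fun t => 1 - s * t) (-s) s⁻¹ := by
    simpa using ((hasDerivAt_id s⁻¹).const_mul s).const_sub 1
  convert tendsto_div_nhdsNE_of_hasDerivAt ((hasDerivAt_weight n d hs0 hqs hqs').sub_const 1) hg
    (by rw [weight_inv_self n d hs0 hqs hqs', sub_self]) (by rw [mul_inv_cancel₀ hs0, sub_self])
    (neg_ne_zero.mpr hs0) using 2
  field_simp
  ring

end weight

theorem lhopital_limit_finite_part_general
    (qh : ℝ) (hq : qh ∈ Set.Ioo (0 : ℝ) 1) (N : ℕ) (hN : 2 ≤ N) (d : ℕ)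
    (s r : ℝ) (hs : s ∈ Set.Ioo qh 1) (hr : r ∈ Set.Ioo (0 : ℝ) (1 / s)) (hrs : r ≠ s) :
    Tendsto
      (fun t : ℝ =>
        (1 / (1 - s * t)) *
          (1 + (1 + (1 - t ^ 2) * (1 - s * r) / ((t - s) * (t - r))
                  - (1 - t * r) * (1 - s ^ 2) / ((t - s) * (s - r))) *
              ((t * s) ^ (d + 2) /
                (((1 - qh / t) / (1 - qh * t)) ^ (N - 2) *
                  ((1 - qh / s) / (1 - qh * s)) ^ (N - 2)))))
      (nhdsWithin (1 / s) (Set.Ioo qh (1 / qh) \ {1 / s}))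
      (𝓝 ((d + 2 : ℝ) - (N - 2 : ℝ) * qh * (1 / s + s - 2 * qh) /
            ((1 - qh / s) * (1 - qh * s))
          - (1 - r ^ 2) * s / ((s - r) * (1 - s * r)))) := by
  obtain ⟨hq0, -⟩ := hq
  obtain ⟨hqs, hs1⟩ := hs
  have hs0 : 0 < s := hq0.trans hqs
  have hqs' : qh * s ≠ 1 := by nlinarith
  have hsr : s ≠ r := hrs.symm
  have hsr0 : s - r ≠ 0 := sub_ne_zero.mpr hsr
  have hsr1 : 1 - s * r ≠ 0 := by nlinarith [(lt_div_iff₀ hs0).mp hr.2]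
  rw [one_div s] at hr ⊢
  have hcs : s⁻¹ ≠ s := (hs1.trans ((one_lt_inv₀ hs0).mpr hs1)).ne'
  have hcr : s⁻¹ ≠ r := hr.2.ne'
  have hB : Tendsto (bracket s r) (𝓝[≠] s⁻¹) (𝓝 (-1)) := by
    convert (continuousAt_bracket hcs hcr hsr).tendsto.mono_left nhdsWithin_le_nhds
    rw [bracket_eq hcs hcr hsr]
    field_simp
  have hfirst : Tendsto (fun t => -(1 - r ^ 2) / ((s - r) * (t - r))) (𝓝[≠] s⁻¹)
      (𝓝 (-(1 - r ^ 2) / ((s - r) * (s⁻¹ - r)))) := by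
    have := sub_ne_zero.mpr hcr
    exact ContinuousAt.tendsto (by fun_prop (disch := positivity)) |>.mono_left nhdsWithin_le_nhds
  have hsplit : ∀ᶠ t in 𝓝[≠] s⁻¹, -(1 - r ^ 2) / ((s - r) * (t - r)) +
      bracket s r t * ((weight qh (N - 2) d s t - 1) / (1 - s * t)) =
      1 / (1 - s * t) * (1 + bracket s r t * weight qh (N - 2) d s t) := by
    filter_upwards [self_mem_nhdsWithin, nhdsWithin_le_nhds (eventually_ne_nhds hcs),
      nhdsWithin_le_nhds (eventually_ne_nhds hcr)] with t htc hts htr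
    refine (one_div_mul_one_add_bracket_mul hts htr hsr ?_).symm
    exact sub_ne_zero.mpr fun h => htc (inv_eq_of_mul_eq_one_right h.symm).symm
  have hvalue : (d + 2 : ℝ) - (N - 2 : ℝ) * qh * (s⁻¹ + s - 2 * qh) /
        ((1 - qh / s) * (1 - qh * s)) - (1 - r ^ 2) * s / ((s - r) * (1 - s * r)) =
      -(1 - r ^ 2) / ((s - r) * (s⁻¹ - r)) + -1 * (((N - 2 : ℕ) : ℝ) * qh *
        (s⁻¹ + s - 2 * qh) / ((1 - qh / s) * (1 - qh * s)) - (d + 2)) := by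
    push_cast [Nat.cast_sub hN]
    field_simp
    ring
  rw [hvalue]
  exact ((hfirst.add (hB.mul (tendsto_weight_sub_one_div (N - 2) d hs0.ne' hqs.ne hqs'))).congr'
    hsplit).mono_left (nhdsWithin_mono _ fun _ ht => ht.2)

/-- **L'Hôpital-type limit extracting the finite part as `t → 1/s`.** With
`H(x) = ((1−q̂/x)/(1−q̂x))^{N−2}`, the function
`Φ(t) = (1−st)⁻¹·(1 + (1 + (1−t²)(1−sr)/((t−s)(t−r)) − (1−tr)(1−s²)/((t−s)(s−r)))·(ts)^{d+2}/(H(t)H(s)))`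
converges, as `t → 1/s` through `t ∈ (q̂, 1/q̂) \ {1/s}`, to
`(d+2) − (N−2)·q̂·(1/s+s−2q̂)/((1−q̂/s)(1−q̂s)) − (1−r²)·s/((s−r)(1−sr))`. -/
theorem lhopital_limit_finite_part
    (qh : ℝ) (hq : qh ∈ Set.Ioo (0 : ℝ) 1) (N : ℕ) (hN : 2 ≤ N) (d : ℕ) (hd : 0 ≤ d)
    (s r : ℝ) (hs : s ∈ Set.Ioo qh 1) (hr : r ∈ Set.Ioo (0 : ℝ) (1 / s)) (hrs : r ≠ s) :
    Tendsto
      (fun t : ℝ =>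
        (1 / (1 - s * t)) *
          (1 + (1 + (1 - t ^ 2) * (1 - s * r) / ((t - s) * (t - r))
                  - (1 - t * r) * (1 - s ^ 2) / ((t - s) * (s - r))) *
              ((t * s) ^ (d + 2) /
                (((1 - qh / t) / (1 - qh * t)) ^ (N - 2) *
                  ((1 - qh / s) / (1 - qh * s)) ^ (N - 2)))))
      (nhdsWithin (1 / s) (Set.Ioo qh (1 / qh) \ {1 / s}))
      (𝓝 ((d + 2 : ℝ) - (N - 2 : ℝ) * qh * (1 / s + s - 2 * qh) /
            ((1 - qh / s) * (1 - qh * s))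
          - (1 - r ^ 2) * s / ((s - r) * (1 - s * r)))) :=
  lhopital_limit_finite_part_general qh hq N hN d s r hs hr hrs
end

section
/- Fix q̂ ∈ (0,1). The function x ↦ M(1 + x·e^{−iπ/3}) is strictly decreasing on the interval [0, 1). -/
open Complex

/-- The real part of the steepest-descent phase function `h₀` of half-space geometric LPP:
`M(w) = log|1−q̂/w| − log|1−q̂w| − (2q̂/(1−q̂))·log|w|`. -/
noncomputable def phaseRe (qh : ℝ) (w : ℂ) : ℝ :=
  Real.log ‖1 - (qh : ℂ) / w‖ - Real.log ‖1 - (qh : ℂ) * w‖ -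
    (2 * qh / (1 - qh)) * Real.log ‖w‖

/-!
Since `ω = e^{-iπ/3}` has real part `1/2` and modulus `1`, `|a + tω|² = a² + at + t²` for real
`a, t`. On `τ₁` the three points `w - q̂`, `1 - q̂w` and `w` are all of this form, so
`M(1 + xω)` is an explicit combination of logarithms of real quadratics in `x`. Its derivative is
`q̂(1+q̂)x² P(x)` over a positive denominator, with `P(x) = (1-q̂)²(x²-2x-2) - q̂x²(1+2x)`,
which is negative on `(0, 1)`.
-/

lemma log_norm_eq_log_normSq_div_two (z : ℂ) : Real.log ‖z‖ = Real.log (normSq z) / 2 := by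
  rw [normSq_eq_norm_sq, Real.log_pow]
  push_cast
  ring

lemma phaseRe_eq_log_normSq {q : ℝ} {w : ℂ} (hq : q ≠ 1) (hw : w ≠ 0) (hwq : w ≠ q) :
    phaseRe q w = (Real.log (normSq (w - q)) - Real.log (normSq (1 - q * w))) / 2
      - (1 + q) / (2 * (1 - q)) * Real.log (normSq w) := by
  have hdiv : 1 - (q : ℂ) / w = (w - q) / w := by field_simp
  have h1q : 1 - q ≠ 0 := sub_ne_zero.mpr hq.symm
  rw [phaseRe, hdiv, norm_div, Real.log_div (by simpa [sub_eq_zero] using hwq) (by simpa using hw)]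
  simp only [log_norm_eq_log_normSq_div_two]
  field_simp
  ring

lemma exp_neg_pi_mul_I_div_three : exp (-(Real.pi * I) / 3) = 1 / 2 - (Real.sqrt 3 / 2) * I := by
  have h : -(Real.pi * I) / 3 = ((-(Real.pi / 3) : ℝ) : ℂ) * I := by push_cast; ring
  rw [h, exp_mul_I, ← ofReal_cos, ← ofReal_sin, Real.cos_neg, Real.sin_neg, Real.cos_pi_div_three,
    Real.sin_pi_div_three]
  push_cast
  ring

lemma normSq_ofReal_add_ofReal_mul_exp_neg_pi_mul_I_div_three (a t : ℝ) :
    normSq (a + t * exp (-(Real.pi * I) / 3)) = a ^ 2 + a * t + t ^ 2 := by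
  have h3 : Real.sqrt 3 ^ 2 = 3 := Real.sq_sqrt (by norm_num)
  rw [exp_neg_pi_mul_I_div_three, normSq_apply]
  simp
  linear_combination t ^ 2 / 4 * h3

lemma sq_add_mul_add_sq_pos {a : ℝ} (t : ℝ) (ha : a ≠ 0) : 0 < a ^ 2 + a * t + t ^ 2 := by
  nlinarith [sq_nonneg (t + a / 2), sq_pos_of_ne_zero ha]

lemma hasDerivAt_log_sq_add_mul_add_sq {a : ℝ} (ha : a ≠ 0) (t : ℝ) :
    HasDerivAt (fun s => Real.log (a ^ 2 + a * s + s ^ 2))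
      ((a + 2 * t) / (a ^ 2 + a * t + t ^ 2)) t := by
  have hquad : HasDerivAt (fun s => a ^ 2 + a * s + s ^ 2) (a + 2 * t) t :=
    ((((hasDerivAt_id t).const_mul a).const_add (a ^ 2)).add (hasDerivAt_pow 2 t)).congr_deriv
      (by norm_num)
  exact hquad.log (sq_add_mul_add_sq_pos t ha).ne'

noncomputable def phaseReTau1 (q x : ℝ) : ℝ :=
  (Real.log ((1 - q) ^ 2 + (1 - q) * x + x ^ 2)
    - Real.log ((1 - q) ^ 2 + (1 - q) * (-q * x) + (-q * x) ^ 2)) / 2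
    - (1 + q) / (2 * (1 - q)) * Real.log (1 + x + x ^ 2)

lemma phaseRe_one_add_mul_exp_neg_pi_mul_I_div_three {q : ℝ} (hq : q ≠ 1) (x : ℝ) :
    phaseRe q (1 + x * exp (-(Real.pi * I) / 3)) = phaseReTau1 q x := by
  set ω := exp (-(Real.pi * I) / 3) with hω
  have h1q : 1 - q ≠ 0 := sub_ne_zero.mpr hq.symm
  have hw : normSq (1 + x * ω) = 1 + x + x ^ 2 := by
    simpa using normSq_ofReal_add_ofReal_mul_exp_neg_pi_mul_I_div_three 1 x
  have hwq : normSq (1 + x * ω - q) = (1 - q) ^ 2 + (1 - q) * x + x ^ 2 := by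
    rw [show 1 + x * ω - q = ((1 - q : ℝ) : ℂ) + x * ω by push_cast; ring, hω,
      normSq_ofReal_add_ofReal_mul_exp_neg_pi_mul_I_div_three]
  have hqw : normSq (1 - q * (1 + x * ω)) = (1 - q) ^ 2 + (1 - q) * (-q * x) + (-q * x) ^ 2 := by
    rw [show 1 - q * (1 + x * ω) = ((1 - q : ℝ) : ℂ) + ((-q * x : ℝ) : ℂ) * ω by push_cast; ring,
      hω, normSq_ofReal_add_ofReal_mul_exp_neg_pi_mul_I_div_three]
  have hw0 : 1 + x * ω ≠ 0 := by
    rw [← normSq_pos, hw]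
    simpa using sq_add_mul_add_sq_pos x one_ne_zero
  have hwq0 : 1 + x * ω ≠ q := by
    rw [← sub_ne_zero, ← normSq_pos, hwq]
    exact sq_add_mul_add_sq_pos x h1q
  rw [phaseRe_eq_log_normSq hq hw0 hwq0, hw, hwq, hqw, phaseReTau1]

lemma hasDerivAt_phaseReTau1 {q : ℝ} (hq : q ≠ 1) (x : ℝ) :
    HasDerivAt (phaseReTau1 q)
      (q * (1 + q) * x ^ 2 * ((1 - q) ^ 2 * (x ^ 2 - 2 * x - 2) - q * x ^ 2 * (1 + 2 * x))
        / (2 * (1 - q) * ((1 - q) ^ 2 + (1 - q) * x + x ^ 2)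
          * ((1 - q) ^ 2 + (1 - q) * (-q * x) + (-q * x) ^ 2) * (1 + x + x ^ 2))) x := by
  have h1q : 1 - q ≠ 0 := sub_ne_zero.mpr hq.symm
  have hdA := hasDerivAt_log_sq_add_mul_add_sq h1q x
  have hdB := (hasDerivAt_log_sq_add_mul_add_sq h1q (-q * x)).comp x
    ((hasDerivAt_id x).const_mul (-q))
  have hdC : HasDerivAt (fun s => Real.log (1 + s + s ^ 2)) ((1 + 2 * x) / (1 + x + x ^ 2)) x := by
    simpa using hasDerivAt_log_sq_add_mul_add_sq one_ne_zero x
  have hA0 := (sq_add_mul_add_sq_pos x h1q).ne'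
  have hB0 := (sq_add_mul_add_sq_pos (-q * x) h1q).ne'
  have hC0 : 1 + x + x ^ 2 ≠ 0 := by simpa using (sq_add_mul_add_sq_pos x one_ne_zero).ne'
  refine (((hdA.sub hdB).div_const 2).sub (hdC.const_mul ((1 + q) / (2 * (1 - q))))).congr_deriv ?_
  set A := (1 - q) ^ 2 + (1 - q) * x + x ^ 2 with hA
  set B := (1 - q) ^ 2 + (1 - q) * (-q * x) + (-q * x) ^ 2 with hB
  set C := 1 + x + x ^ 2 with hC
  field_simp
  rw [hA, hB, hC]
  ring

lemma phaseReTau1_deriv_numerator_neg {q x : ℝ} (hq : q ∈ Set.Ioo (0 : ℝ) 1)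
    (hx : x ∈ Set.Ioo (0 : ℝ) 1) :
    (1 - q) ^ 2 * (x ^ 2 - 2 * x - 2) - q * x ^ 2 * (1 + 2 * x) < 0 := by
  obtain ⟨hq0, hq1⟩ := hq
  obtain ⟨hx0, hx1⟩ := hx
  have h1 : 0 < (1 - q) ^ 2 := by nlinarith
  have h2 : x ^ 2 - 2 * x - 2 < 0 := by nlinarith
  nlinarith [mul_neg_of_pos_of_neg h1 h2,
    mul_pos hq0 (mul_pos (pow_pos hx0 2) (by linarith : (0 : ℝ) < 1 + 2 * x))]

lemma strictAntiOn_phaseReTau1 {q : ℝ} (hq : q ∈ Set.Ioo (0 : ℝ) 1) :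
    StrictAntiOn (phaseReTau1 q) (Set.Ico 0 1) := by
  have hq1 : q ≠ 1 := hq.2.ne
  refine strictAntiOn_of_deriv_neg (convex_Ico 0 1)
    (fun x _ => (hasDerivAt_phaseReTau1 hq1 x).continuousAt.continuousWithinAt) fun x hx => ?_
  rw [interior_Ico] at hx
  rw [(hasDerivAt_phaseReTau1 hq1 x).deriv]
  have h1q : 0 < 1 - q := sub_pos.mpr hq.2
  have hA := sq_add_mul_add_sq_pos x h1q.ne'
  have hB := sq_add_mul_add_sq_pos (-q * x) h1q.ne'
  have hC : 0 < 1 + x + x ^ 2 := by simpa using sq_add_mul_add_sq_pos x one_ne_zero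
  have hfactor : 0 < q * (1 + q) * x ^ 2 := by have := hq.1; have := hx.1; positivity
  exact div_neg_of_neg_of_pos
    (mul_neg_of_pos_of_neg hfactor (phaseReTau1_deriv_numerator_neg hq hx)) (by positivity)

/-- **Steepest descent along the segment `τ₁`.** The map
`x ↦ M(1 + x·e^{−iπ/3})` is strictly decreasing on `[0, 1)`. -/
theorem phaseRe_strictAntiOn_tau1 (qh : ℝ) (hq : qh ∈ Set.Ioo (0 : ℝ) 1) :
    StrictAntiOn (fun x : ℝ => phaseRe qh (1 + (x : ℂ) * Complex.exp (-(Real.pi * Complex.I) / 3)))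
      (Set.Ico (0 : ℝ) 1) := by
  simpa only [phaseRe_one_add_mul_exp_neg_pi_mul_I_div_three hq.2.ne]
    using strictAntiOn_phaseReTau1 hq
end

section
/- For every q̂ ∈ (0,1), M(3/2 + 2/q̂) < 0; explicitly, (2q̂/(q̂−1))·log(3/2 + 2/q̂) + log(1 − 2q̂²/(4 + 3q̂)) − (1/2)·log(1 + 3q̂ + (9/4)q̂²) < 0. -/
open Complex

/-!
At `w = 3/2 + 2/q̂` each of the three terms of `M(w)` is negative: `0 < q̂/w < 1`,
`q̂w = 2 + 3q̂/2 > 2` and `w > 1`. The explicit expression is `M(w)` itself, because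
`q̂/w = 2q̂²/(4 + 3q̂)` and `(q̂w − 1)² = 1 + 3q̂ + (9/4)q̂²`.
-/

lemma phaseRe_ofReal (qh w : ℝ) :
    phaseRe qh w =
      Real.log (1 - qh / w) - Real.log (1 - qh * w) - 2 * qh / (1 - qh) * Real.log w := by
  have hdiv : (1 : ℂ) - qh / w = ((1 - qh / w : ℝ) : ℂ) := by push_cast; ring
  have hmul : (1 : ℂ) - qh * w = ((1 - qh * w : ℝ) : ℂ) := by push_cast; ring
  simp only [phaseRe, hdiv, hmul, Complex.norm_real, Real.norm_eq_abs, Real.log_abs]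

lemma phaseRe_ofReal_neg {qh w : ℝ} (hq : qh ∈ Set.Ioo (0 : ℝ) 1) (hw : 1 < w)
    (hqw : 2 < qh * w) : phaseRe qh w < 0 := by
  obtain ⟨hq0, hq1⟩ := hq
  have hdiv_lt : qh / w < 1 := (div_lt_one (by linarith)).2 (by linarith)
  have hdiv_pos : 0 < qh / w := div_pos hq0 (by linarith)
  have hlog_div : Real.log (1 - qh / w) < 0 := Real.log_neg (by linarith) (by linarith)
  have hlog_mul : 0 < Real.log (1 - qh * w) := by
    rw [← Real.log_neg_eq_log]; exact Real.log_pos (by linarith)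
  have hlog_w : 0 < 2 * qh / (1 - qh) * Real.log w :=
    mul_pos (div_pos (by linarith) (by linarith)) (Real.log_pos hw)
  rw [phaseRe_ofReal]
  linarith

lemma phaseRe_tau3_right_eq {qh : ℝ} (hq0 : 0 < qh) :
    phaseRe qh (((3 : ℝ) / 2 + 2 / qh : ℝ) : ℂ) =
      (2 * qh / (qh - 1)) * Real.log (3 / 2 + 2 / qh)
        + Real.log (1 - 2 * qh ^ 2 / (4 + 3 * qh))
        - (1 / 2) * Real.log (1 + 3 * qh + (9 / 4) * qh ^ 2) := by
  have hdiv : qh / (3 / 2 + 2 / qh) = 2 * qh ^ 2 / (4 + 3 * qh) := by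
    field_simp; ring
  have hsq : 1 + 3 * qh + (9 / 4) * qh ^ 2 = (1 - qh * (3 / 2 + 2 / qh)) ^ 2 := by
    field_simp; ring
  have hcoeff : 2 * qh / (qh - 1) = -(2 * qh / (1 - qh)) := by
    rw [← div_neg, neg_sub]
  rw [phaseRe_ofReal, hdiv, hsq, Real.log_pow, hcoeff]
  push_cast
  ring

/-- **Negativity of the phase at the rightmost endpoint of the arc `τ₃`.** For every
`q̂ ∈ (0,1)`, `M(3/2 + 2/q̂) < 0`; explicitly,
`(2q̂/(q̂−1))·log(3/2 + 2/q̂) + log(1 − 2q̂²/(4 + 3q̂)) − (1/2)·log(1 + 3q̂ + (9/4)q̂²) < 0`. -/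
theorem phaseRe_neg_at_tau3_right (qh : ℝ) (hq : qh ∈ Set.Ioo (0 : ℝ) 1) :
    phaseRe qh (((3 : ℝ) / 2 + 2 / qh : ℝ) : ℂ) < 0 ∧
      (2 * qh / (qh - 1)) * Real.log (3 / 2 + 2 / qh)
        + Real.log (1 - 2 * qh ^ 2 / (4 + 3 * qh))
        - (1 / 2) * Real.log (1 + 3 * qh + (9 / 4) * qh ^ 2) < 0 := by
  have hq0 := hq.1
  have hmul : qh * (3 / 2 + 2 / qh) = 2 + 3 / 2 * qh := by field_simp; ring
  have hneg : phaseRe qh (((3 : ℝ) / 2 + 2 / qh : ℝ) : ℂ) < 0 :=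
    phaseRe_ofReal_neg hq (by linarith [div_pos two_pos hq0]) (by linarith)
  exact ⟨hneg, phaseRe_tau3_right_eq hq0 ▸ hneg⟩
end

section
/- For every q̂ ∈ (0,1), M(3/2 + (2/q̂)·i) < 0; explicitly, (q̂/(q̂−1))·log(9/4 + 4/q̂²) − (1/2)·log(5 − 3q̂ + (9/4)q̂²) + log(1 − (12q̂³ − 4q̂⁴)/(16 + 9q̂²)) < 0. -/
/-!
At `w = 3/2 + (2/q̂)i` all three terms of `M(w)` have a sign: `|1 − q̂/w| < 1` because
`Re w > q̂/2` puts `w` closer to `q̂` than to `0`, `|1 − q̂w| ≥ |Im(q̂w)| = 2`, and `|w| ≥ Re w > 1`.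
The explicit expression equals `M(w) + log|1 − q̂/w|`, its three arguments being
`|w|²`, `|1 − q̂w|²` and `|1 − q̂/w|²`.
-/

open Complex

theorem norm_sub_ofReal_sq (w : ℂ) (a : ℝ) : ‖w - a‖ ^ 2 = (w.re - a) ^ 2 + w.im ^ 2 := by
  rw [Complex.sq_norm, normSq_apply]
  simp only [sub_re, sub_im, ofReal_re, ofReal_im, sub_zero]
  ring

theorem norm_sq_eq_re_sq_add_im_sq (w : ℂ) : ‖w‖ ^ 2 = w.re ^ 2 + w.im ^ 2 := by
  simpa using norm_sub_ofReal_sq w 0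

theorem norm_one_sub_ofReal_div_lt_one {w : ℂ} {a : ℝ} (ha : 0 < a) (h : a < 2 * w.re) :
    ‖1 - a / w‖ < 1 := by
  have hw : w ≠ 0 := fun h0 => by simp [h0] at h; linarith
  have hnorm : 0 < ‖w‖ := norm_pos_iff.2 hw
  have hcloser : ‖w - a‖ < ‖w‖ := by
    refine lt_of_pow_lt_pow_left₀ 2 hnorm.le ?_
    rw [norm_sub_ofReal_sq, norm_sq_eq_re_sq_add_im_sq]
    nlinarith
  rwa [one_sub_div hw, norm_div, div_lt_one hnorm]

theorem phaseRe_neg {qh : ℝ} {w : ℂ} (hq : qh ∈ Set.Ioo (0 : ℝ) 1) (hw : 1 < ‖w‖)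
    (hmul : 1 ≤ ‖1 - (qh : ℂ) * w‖) (hdiv_pos : 0 < ‖1 - (qh : ℂ) / w‖)
    (hdiv_lt : ‖1 - (qh : ℂ) / w‖ < 1) : phaseRe qh w < 0 := by
  obtain ⟨hq0, hq1⟩ := hq
  have hlog_div : Real.log ‖1 - (qh : ℂ) / w‖ < 0 := Real.log_neg hdiv_pos hdiv_lt
  have hlog_mul : 0 ≤ Real.log ‖1 - (qh : ℂ) * w‖ := Real.log_nonneg hmul
  have hlog_w : 0 < 2 * qh / (1 - qh) * Real.log ‖w‖ :=
    mul_pos (div_pos (by positivity) (by linarith)) (Real.log_pos hw)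
  unfold phaseRe
  linarith

noncomputable def tau3Top (qh : ℝ) : ℂ := 3 / 2 + ((2 / qh : ℝ) : ℂ) * I

@[simp] theorem tau3Top_re (qh : ℝ) : (tau3Top qh).re = 3 / 2 := by simp [tau3Top]

@[simp] theorem tau3Top_im (qh : ℝ) : (tau3Top qh).im = 2 / qh := by simp [tau3Top]

theorem tau3Top_ne_zero (qh : ℝ) : tau3Top qh ≠ 0 := fun h => by
  have := tau3Top_re qh
  rw [h, zero_re] at this
  norm_num at this

theorem norm_tau3Top_sq {qh : ℝ} (hq : qh ≠ 0) : ‖tau3Top qh‖ ^ 2 = 9 / 4 + 4 / qh ^ 2 := by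
  rw [norm_sq_eq_re_sq_add_im_sq, tau3Top_re, tau3Top_im]
  field_simp
  ring

theorem im_one_sub_mul_tau3Top {qh : ℝ} (hq : qh ≠ 0) : (1 - (qh : ℂ) * tau3Top qh).im = -2 := by
  simp [field]

theorem one_le_norm_one_sub_mul_tau3Top {qh : ℝ} (hq : qh ≠ 0) :
    1 ≤ ‖1 - (qh : ℂ) * tau3Top qh‖ := by
  have := abs_im_le_norm (1 - (qh : ℂ) * tau3Top qh)
  rw [im_one_sub_mul_tau3Top hq] at this
  norm_num at this
  linarith

theorem norm_one_sub_mul_tau3Top_sq {qh : ℝ} (hq : qh ≠ 0) :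
    ‖1 - (qh : ℂ) * tau3Top qh‖ ^ 2 = 5 - 3 * qh + 9 / 4 * qh ^ 2 := by
  rw [norm_sq_eq_re_sq_add_im_sq, im_one_sub_mul_tau3Top hq]
  simp only [sub_re, one_re, mul_re, ofReal_re, ofReal_im, tau3Top_re, zero_mul, sub_zero]
  ring

theorem norm_one_sub_div_tau3Top_sq {qh : ℝ} (hq : qh ≠ 0) :
    ‖1 - (qh : ℂ) / tau3Top qh‖ ^ 2 = 1 - (12 * qh ^ 3 - 4 * qh ^ 4) / (16 + 9 * qh ^ 2) := by
  rw [one_sub_div (tau3Top_ne_zero qh), norm_div, div_pow, norm_sub_ofReal_sq, tau3Top_re,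
    tau3Top_im, norm_tau3Top_sq hq]
  field_simp
  ring

theorem one_sub_div_tau3Top_ne_zero {qh : ℝ} (hq : qh ≠ 0) : 1 - (qh : ℂ) / tau3Top qh ≠ 0 :=
  sub_ne_zero.2 fun h => by
    have := congrArg im ((div_eq_one_iff_eq (tau3Top_ne_zero qh)).1 h.symm)
    rw [ofReal_im, tau3Top_im] at this
    exact div_ne_zero two_ne_zero hq this.symm

theorem explicit_eq_phaseRe_add {qh : ℝ} (hq : qh ≠ 0) :
    (qh / (qh - 1)) * Real.log (9 / 4 + 4 / qh ^ 2)
        - (1 / 2) * Real.log (5 - 3 * qh + (9 / 4) * qh ^ 2)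
        + Real.log (1 - (12 * qh ^ 3 - 4 * qh ^ 4) / (16 + 9 * qh ^ 2)) =
      phaseRe qh (tau3Top qh) + Real.log ‖1 - (qh : ℂ) / tau3Top qh‖ := by
  rw [← norm_tau3Top_sq hq, ← norm_one_sub_mul_tau3Top_sq hq, ← norm_one_sub_div_tau3Top_sq hq,
    Real.log_pow, Real.log_pow, Real.log_pow, phaseRe, ← neg_sub 1 qh, div_neg]
  push_cast
  ring

/-- **Negativity of the phase where the arc `τ₃` meets the vertical segment `τ₂`.** For
every `q̂ ∈ (0,1)`, `M(3/2 + (2/q̂)i) < 0`; explicitly,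
`(q̂/(q̂−1))·log(9/4 + 4/q̂²) − (1/2)·log(5 − 3q̂ + (9/4)q̂²) + log(1 − (12q̂³ − 4q̂⁴)/(16 + 9q̂²)) < 0`. -/
theorem phaseRe_neg_at_tau3_top (qh : ℝ) (hq : qh ∈ Set.Ioo (0 : ℝ) 1) :
    phaseRe qh (3 / 2 + ((2 / qh : ℝ) : ℂ) * Complex.I) < 0 ∧
      (qh / (qh - 1)) * Real.log (9 / 4 + 4 / qh ^ 2)
        - (1 / 2) * Real.log (5 - 3 * qh + (9 / 4) * qh ^ 2)
        + Real.log (1 - (12 * qh ^ 3 - 4 * qh ^ 4) / (16 + 9 * qh ^ 2)) < 0 := by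
  have hq0 : qh ≠ 0 := hq.1.ne'
  have hw : 1 < ‖tau3Top qh‖ := by linarith [re_le_norm (tau3Top qh), tau3Top_re qh]
  have hdiv_lt : ‖1 - (qh : ℂ) / tau3Top qh‖ < 1 :=
    norm_one_sub_ofReal_div_lt_one hq.1 (by rw [tau3Top_re]; linarith [hq.2])
  have hdiv_pos : 0 < ‖1 - (qh : ℂ) / tau3Top qh‖ :=
    norm_pos_iff.2 (one_sub_div_tau3Top_ne_zero hq0)
  have hM : phaseRe qh (tau3Top qh) < 0 :=
    phaseRe_neg hq hw (one_le_norm_one_sub_mul_tau3Top hq0) hdiv_pos hdiv_lt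
  refine ⟨hM, ?_⟩
  rw [explicit_eq_phaseRe_add hq0]
  linarith [Real.log_neg hdiv_pos hdiv_lt]
end

section
/- Fix q̂ ∈ (0,1), r̃ ∈ ℝ and u > 0, and set c₀ = 2q̂(1+q̂)/(1−q̂)³. For N ∈ ℕ and X ∈ ℝ set r_N = 1 + (c₀N/2)^{−1/3}·r̃ and k_N(X) = (2q̂/(1−q̂))·N + (c₀N/2)^{1/3}·X, and (for N large enough that q̂ < r_N < 1/q̂) define f_N(X) = r_N^{k_N(X)+1} · ((1−q̂·r_N)/(1−q̂/r_N))^{N−2}, using real powers. Then, as N → ∞, f_N(X) converges to exp(−r̃³/3 + r̃·X) uniformly over X ∈ [−u, u]. -/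
/-!
Put `s = (c₀N/2)^{1/3}` and `r = 1 + r̃/s`. Taking logarithms,
`f_N(X) = exp(α_N + β_N X)` with `β_N = s log r → r̃` and
`α_N = N φ(r) + log r - 2 log w(r)`, where `w(r) = (1 - q̂r)/(1 - q̂/r)` and
`φ(r) = (2q̂/(1-q̂)) log r + log w(r)`. The drift `2q̂/(1-q̂)` is exactly the one for which `φ`
vanishes to third order at `r = 1`: the cubic Taylor expansion of `log` gives
`φ(1 + x) = -(c₀/6) x³ + O(x⁴)`, so `N φ(r) → -(c₀N/6)(r̃/s)³ = -r̃³/3`.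
Uniformity in `X ∈ [-u, u]` follows from the joint continuity of `(α, β, X) ↦ exp(α + βX)`.
-/

open Filter Topology Asymptotics

theorem Real.isBigO_log_one_sub_add_sum_range (n : ℕ) :
    (fun x : ℝ => Real.log (1 - x) + ∑ i ∈ Finset.range n, x ^ (i + 1) / (i + 1))
      =O[𝓝 0] fun x => x ^ (n + 1) := by
  refine IsBigO.of_bound 2 ?_
  filter_upwards [Metric.closedBall_mem_nhds (0 : ℝ) (by norm_num : (0 : ℝ) < 1 / 2)] with x hx
  rw [Metric.mem_closedBall, dist_zero_right, Real.norm_eq_abs] at hx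
  rw [add_comm, Real.norm_eq_abs, Real.norm_eq_abs, ← pow_abs]
  calc _ ≤ |x| ^ (n + 1) / (1 - |x|) :=
        Real.abs_log_sub_add_sum_range_le (hx.trans_lt (by norm_num)) n
    _ ≤ |x| ^ (n + 1) / (1 / 2) := by gcongr; linarith
    _ = 2 * |x| ^ (n + 1) := by ring

theorem isBigO_pow_comp_const_mul {F : ℝ → ℝ} {n : ℕ} (hF : F =O[𝓝 0] fun x => x ^ n) (a : ℝ) :
    (fun x => F (a * x)) =O[𝓝 0] fun x => x ^ n := by
  have ha : Tendsto (fun x : ℝ => a * x) (𝓝 0) (𝓝 0) := by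
    simpa using (continuous_const_mul a).tendsto 0
  refine (hF.comp_tendsto ha).trans ?_
  simp only [Function.comp_def, mul_pow]
  exact (isBigO_refl _ _).const_mul_left _

theorem tendsto_pow_mul_comp_div_atTop_of_isBigO {F : ℝ → ℝ} {n : ℕ}
    (hF : F =O[𝓝 0] fun x => x ^ (n + 1)) (c : ℝ) :
    Tendsto (fun s => s ^ n * F (c / s)) atTop (𝓝 0) := by
  have hc : Tendsto (fun s : ℝ => c / s) atTop (𝓝 0) := tendsto_const_nhds.div_atTop tendsto_id
  refine ((isBigO_refl (fun s : ℝ => s ^ n) atTop).mul (hF.comp_tendsto hc)).trans_tendsto ?_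
  refine (tendsto_const_nhds.div_atTop tendsto_id :
    Tendsto (fun s : ℝ => c ^ (n + 1) / s) _ _).congr' ?_
  filter_upwards [eventually_ne_atTop 0] with s hs
  simp only [Function.comp_apply, div_pow]
  field_simp
  ring

theorem tendstoUniformlyOn_comp_of_continuous_uncurry {P β E ι : Type*} [TopologicalSpace P]
    [TopologicalSpace β] [UniformSpace E] {f : P → β → E} (hf : Continuous (Function.uncurry f))
    {k : Set β} (hk : IsCompact k) {l : Filter ι} {g : ι → P} {p : P} (hg : Tendsto g l (𝓝 p)) :
    TendstoUniformlyOn (fun i => f (g i)) (f p) l k := by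
  intro u hu
  obtain ⟨v, hv, hvu⟩ := hk.mem_uniformity_of_prod hf.continuousOn (Set.mem_univ p)
    (symm_le_uniformity hu)
  rw [nhdsWithin_univ] at hv
  filter_upwards [hg hv] with i hi x hx
  exact hvu _ hi x hx

noncomputable def criticalConstant (q : ℝ) : ℝ := 2 * q * (1 + q) / (1 - q) ^ 3

noncomputable def weightRatio (q r : ℝ) : ℝ := (1 - q * r) / (1 - q / r)

noncomputable def criticalPhase (q r : ℝ) : ℝ :=
  2 * q / (1 - q) * Real.log r + Real.log (weightRatio q r)

theorem weightRatio_one {q : ℝ} (hq : q ≠ 1) : weightRatio q 1 = 1 := by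
  rw [weightRatio, mul_one, div_one, div_self (sub_ne_zero.mpr hq.symm)]

theorem continuousAt_weightRatio_one {q : ℝ} (hq : q ≠ 1) : ContinuousAt (weightRatio q) 1 := by
  have h1q : 1 - q / 1 ≠ 0 := by rw [div_one]; exact sub_ne_zero.mpr hq.symm
  unfold weightRatio
  fun_prop (disch := first | assumption | exact one_ne_zero)

theorem eventually_pos_and_weightRatio_pos {q : ℝ} (hq : q ≠ 1) :
    ∀ᶠ r in 𝓝 (1 : ℝ), 0 < r ∧ 0 < weightRatio q r :=
  (eventually_gt_nhds one_pos).and ((continuousAt_weightRatio_one hq).eventually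
    (eventually_gt_nhds (by rw [weightRatio_one hq]; exact one_pos)))

theorem log_weightRatio_one_add {q x : ℝ} (hq : q ≠ 1) (hx : 1 + x ≠ 0)
    (ha : 1 - q / (1 - q) * x ≠ 0) (hb : 1 + x / (1 - q) ≠ 0) :
    Real.log (weightRatio q (1 + x))
      = Real.log (1 - q / (1 - q) * x) - Real.log (1 + x / (1 - q)) + Real.log (1 + x) := by
  have h1q : 1 - q ≠ 0 := sub_ne_zero.mpr hq.symm
  have hnum : 1 - q * (1 + x) = (1 - q) * (1 - q / (1 - q) * x) := by field_simp; ring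
  have hden : 1 - q / (1 + x) = (1 - q) * (1 + x / (1 - q)) / (1 + x) := by field_simp; ring
  rw [weightRatio, hnum, hden, Real.log_div (by positivity) (by positivity), Real.log_mul h1q ha,
    Real.log_div (mul_ne_zero h1q hb) hx, Real.log_mul h1q hb]
  ring

theorem isBigO_criticalPhase_add_cube {q : ℝ} (hq : q ≠ 1) :
    (fun x => criticalPhase q (1 + x) + criticalConstant q / 6 * x ^ 3)
      =O[𝓝 0] fun x => x ^ 4 := by
  set G : ℝ → ℝ := fun y => Real.log (1 - y) + ∑ i ∈ Finset.range 3, y ^ (i + 1) / (i + 1)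
  have hG : G =O[𝓝 0] fun y => y ^ 4 := Real.isBigO_log_one_sub_add_sum_range 3
  have h1q : 1 - q ≠ 0 := sub_ne_zero.mpr hq.symm
  have hsum := ((isBigO_pow_comp_const_mul hG (-1)).const_mul_left (2 * q / (1 - q) + 1)).add
    ((isBigO_pow_comp_const_mul hG (q / (1 - q))).sub
      (isBigO_pow_comp_const_mul hG (-1 / (1 - q))))
  refine hsum.congr' ?_ EventuallyEq.rfl
  have hne : ∀ c : ℝ, ∀ᶠ x in 𝓝 (0 : ℝ), 1 + c * x ≠ 0 := fun c =>
    (continuous_const.add (continuous_const_mul c)).continuousAt.eventually_ne (by simp)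
  filter_upwards [hne 1, hne (-(q / (1 - q))), hne (1 / (1 - q))] with x hx ha hb
  rw [one_mul] at hx
  rw [neg_mul, ← sub_eq_add_neg] at ha
  rw [one_div_mul_eq_div] at hb
  simp only [G, criticalPhase, criticalConstant, log_weightRatio_one_add hq hx ha hb,
    Finset.sum_range_succ, Finset.sum_range_zero, Nat.cast_zero, Nat.cast_one, Nat.cast_ofNat]
  rw [show 1 - -1 * x = 1 + x by ring, show 1 - -1 / (1 - q) * x = 1 + x / (1 - q) by ring]
  generalize Real.log (1 + x) = L₁
  generalize Real.log (1 - q / (1 - q) * x) = L₂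
  generalize Real.log (1 + x / (1 - q)) = L₃
  norm_num only
  field_simp
  ring

theorem tendsto_criticalExponent {q : ℝ} (hq0 : 0 < q) (hq1 : q < 1) (rT : ℝ) :
    Tendsto (fun s : ℝ => 2 * s ^ 3 / criticalConstant q * criticalPhase q (1 + rT / s)
        + Real.log (1 + rT / s) - 2 * Real.log (weightRatio q (1 + rT / s)))
      atTop (𝓝 (-rT ^ 3 / 3)) := by
  have hq : q ≠ 1 := hq1.ne
  have hc : criticalConstant q ≠ 0 :=
    (div_pos (by positivity) (pow_pos (sub_pos.mpr hq1) 3)).ne'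
  have hcubic := tendsto_pow_mul_comp_div_atTop_of_isBigO (isBigO_criticalPhase_add_cube hq) rT
  have hlogs : Tendsto (fun r => Real.log r - 2 * Real.log (weightRatio q r)) (𝓝 1) (𝓝 0) := by
    have hw := (continuousAt_weightRatio_one hq).log (by rw [weightRatio_one hq]; exact one_ne_zero)
    simpa [weightRatio_one hq] using
      (continuousAt_id.log one_ne_zero).tendsto.sub (hw.const_mul 2).tendsto
  have hx : Tendsto (fun s : ℝ => rT / s) atTop (𝓝 0) := tendsto_const_nhds.div_atTop tendsto_id
  have hr : Tendsto (fun s : ℝ => 1 + rT / s) atTop (𝓝 1) := by simpa using hx.const_add 1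
  have hlim := ((hcubic.const_mul (2 / criticalConstant q)).add (hlogs.comp hr)).add_const
    (-rT ^ 3 / 3)
  rw [mul_zero, zero_add, zero_add] at hlim
  refine hlim.congr' ?_
  filter_upwards [eventually_gt_atTop 0] with s hs
  simp only [Function.comp_apply]
  generalize criticalPhase q (1 + rT / s) = Φ
  field_simp
  ring

theorem rpow_mul_weightRatio_pow_eq_exp {q r : ℝ} (hr : 0 < r) (hw : 0 < weightRatio q r)
    {n : ℕ} (hn : 2 ≤ n) (t : ℝ) :
    r ^ (2 * q / (1 - q) * n + t + 1) * weightRatio q r ^ (n - 2)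
      = Real.exp (n * criticalPhase q r + Real.log r - 2 * Real.log (weightRatio q r)
          + t * Real.log r) := by
  rw [Real.rpow_def_of_pos hr, ← Real.exp_log (pow_pos hw _), Real.log_pow, Nat.cast_sub hn,
    ← Real.exp_add, criticalPhase]
  congr 1
  push_cast
  ring

theorem f_r_tendstoUniformlyOn_critical_scaling_general
    (qh : ℝ) (hq : qh ∈ Set.Ioo (0 : ℝ) 1) (rTilde : ℝ) (u : ℝ) :
    TendstoUniformlyOn
      (fun (N : ℕ) (X : ℝ) =>
        let c₀ : ℝ := 2 * qh * (1 + qh) / (1 - qh) ^ 3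
        let rN : ℝ := 1 + (c₀ * N / 2) ^ (-(1 / 3) : ℝ) * rTilde
        let kN : ℝ := (2 * qh / (1 - qh)) * N + (c₀ * N / 2) ^ ((1 : ℝ) / 3) * X
        rN ^ (kN + 1) * ((1 - qh * rN) / (1 - qh / rN)) ^ (N - 2))
      (fun X => Real.exp (-rTilde ^ 3 / 3 + rTilde * X))
      atTop (Set.Icc (-u) u) := by
  obtain ⟨hq0, hq1⟩ := hq
  have hc₀ : 0 < criticalConstant qh := div_pos (by positivity) (pow_pos (sub_pos.mpr hq1) 3)
  set s : ℕ → ℝ := fun N => (criticalConstant qh * N / 2) ^ ((1 : ℝ) / 3)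
  have hs : Tendsto s atTop atTop := (tendsto_rpow_atTop (by norm_num)).comp
    ((tendsto_natCast_atTop_atTop.const_mul_atTop hc₀).atTop_div_const two_pos)
  have hN : ∀ N : ℕ, 2 * s N ^ 3 / criticalConstant qh = N := fun N => by
    rw [← Real.rpow_natCast, ← Real.rpow_mul (by positivity)]
    norm_num
    field_simp
  have hα := (tendsto_criticalExponent hq0 hq1 rTilde).comp hs
  have hβ := (Real.tendsto_mul_log_one_add_div_atTop rTilde).comp hs
  refine (tendstoUniformlyOn_comp_of_continuous_uncurry
    (f := fun p X => Real.exp (p.1 + p.2 * X)) (by fun_prop) isCompact_Icc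
    (hα.prodMk_nhds hβ)).congr ?_
  have hr : Tendsto (fun N => 1 + rTilde / s N) atTop (𝓝 1) := by
    simpa using (tendsto_const_nhds.div_atTop hs).const_add 1
  filter_upwards [hr.eventually (eventually_pos_and_weightRatio_pos hq1.ne),
    eventually_ge_atTop 2] with N ⟨hr₀, hw⟩ hN2 X _
  have hrN : (criticalConstant qh * N / 2) ^ (-(1 / 3) : ℝ) * rTilde = rTilde / s N := by
    rw [Real.rpow_neg (by positivity), inv_mul_eq_div]
  change _ = (1 + (criticalConstant qh * N / 2) ^ (-(1 / 3) : ℝ) * rTilde)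
      ^ (2 * qh / (1 - qh) * N + s N * X + 1)
    * weightRatio qh (1 + (criticalConstant qh * N / 2) ^ (-(1 / 3) : ℝ) * rTilde) ^ (N - 2)
  rw [hrN, rpow_mul_weightRatio_pow_eq_exp hr₀ hw hN2]
  simp only [Function.comp_apply, hN]
  congr 1
  ring

/-- **Uniform convergence of `f^r` under KPZ critical scaling.** With
`c₀ = 2q̂(1+q̂)/(1−q̂)³`, `r_N = 1 + (c₀N/2)^{−1/3}·rTilde` and
`k_N(X) = (2q̂/(1−q̂))·N + (c₀N/2)^{1/3}·X`, the functions
`f_N(X) = r_N^{k_N(X)+1}·((1−q̂r_N)/(1−q̂/r_N))^{N−2}` converge, as `N → ∞`,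
to `exp(−rTilde³/3 + rTilde·X)` uniformly over `X ∈ [−u, u]`. -/
theorem f_r_tendstoUniformlyOn_critical_scaling
    (qh : ℝ) (hq : qh ∈ Set.Ioo (0 : ℝ) 1) (rTilde : ℝ) (u : ℝ) (hu : 0 < u) :
    TendstoUniformlyOn
      (fun (N : ℕ) (X : ℝ) =>
        let c₀ : ℝ := 2 * qh * (1 + qh) / (1 - qh) ^ 3
        let rN : ℝ := 1 + (c₀ * N / 2) ^ (-(1 / 3) : ℝ) * rTilde
        let kN : ℝ := (2 * qh / (1 - qh)) * N + (c₀ * N / 2) ^ ((1 : ℝ) / 3) * X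
        rN ^ (kN + 1) * ((1 - qh * rN) / (1 - qh / rN)) ^ (N - 2))
      (fun X => Real.exp (-rTilde ^ 3 / 3 + rTilde * X))
      atTop (Set.Icc (-u) u) :=
  f_r_tendstoUniformlyOn_critical_scaling_general qh hq rTilde u
end

section
/- Fix q̂ ∈ (0,1), s̃ < 0 and u > 0, and set c₀ = 2q̂(1+q̂)/(1−q̂)³. For N ∈ ℕ and X ∈ ℝ set s_N = 1 + (c₀N/2)^{−1/3}·s̃ and k_N(X) = (2q̂/(1−q̂))·N + (c₀N/2)^{1/3}·X, and (for N large enough that q̂ < s_N < 1/q̂) define f_N(X) = s_N^{k_N(X)+1} · ((1−q̂·s_N)/(1−q̂/s_N))^{N−2}, using real powers. Then there exist constants C > 0, σ ∈ (0, −s̃) and N₀ ∈ ℕ such that for all N ≥ N₀ and all X ≥ −u, one has f_N(X) ≤ C·exp((s̃+σ)·X). -/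
/-!
Write `s_N = 1 + ε` with `ε = s̃ / b` and `b = (c₀N/2)^{1/3}`, so that `k_N = αN + bX` with
`α = 2q̂/(1-q̂)`. Since `s_N ≤ 1 ≤ R := (1 - q̂ s_N)/(1 - q̂/s_N)`, we have
`f_N(X) ≤ (s_N^{αN} R^N) · s_N^{bX}`. With `v = -q̂ε/(1-q̂)` and `w = ε/(1-q̂)` one has
`R = (1+v)(1+ε)/(1+w)`, and for this particular `α` the first- and second-order terms of
`α log(1+ε) + log R` cancel; hence `s_N^{αN} R^N ≤ exp(M N |ε|³)` with
`M = 2(1+q̂)/(1-q̂) + 4/(1-q̂)³`, and `N |ε|³ = 2(-s̃)³/c₀` does not depend on `N`. Finally `b log s_N ∈ [2s̃, s̃]`, which gives `s_N^{bX} ≤ exp(3(-s̃)u/2) · exp(s̃X/2)` for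
`X ≥ -u`, i.e. the bound with `σ = -s̃/2`.
-/

open Real Filter

theorem abs_log_one_add_sub_le {t : ℝ} (ht : |t| ≤ 1 / 2) :
    |log (1 + t) - (t - t ^ 2 / 2)| ≤ 2 * |t| ^ 3 := by
  have h := abs_log_sub_add_sum_range_le (x := -t) (by rw [abs_neg]; linarith) 2
  norm_num [Finset.sum_range_succ] at h
  calc |log (1 + t) - (t - t ^ 2 / 2)| = |-t + t ^ 2 / 2 + log (1 + t)| := by congr 1; ring
    _ ≤ |t| ^ 3 / (1 - |t|) := h
    _ ≤ 2 * |t| ^ 3 := by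
        rw [div_le_iff₀ (by linarith)]
        nlinarith [abs_nonneg t, pow_nonneg (abs_nonneg t) 3]

theorem two_mul_le_log_one_add {t : ℝ} (ht : -(1 / 2) ≤ t) (ht0 : t ≤ 0) :
    2 * t ≤ log (1 + t) := by
  have hpos : 0 < 1 + t := by linarith
  calc 2 * t ≤ t / (1 + t) := by rw [le_div_iff₀ hpos]; nlinarith
    _ = 1 - (1 + t)⁻¹ := by field_simp; ring
    _ ≤ log (1 + t) := one_sub_inv_le_log_of_pos hpos

theorem one_sub_mul_div_one_sub_div_eq {q ε : ℝ} (hq : q < 1) (hε : 0 < 1 + ε)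
    (hqε : q < 1 + ε) :
    (1 - q * (1 + ε)) / (1 - q / (1 + ε))
      = (1 + -(q * ε) / (1 - q)) * (1 + ε) / (1 + ε / (1 - q)) := by
  have h1 : 1 - q ≠ 0 := by linarith
  have h2 : 1 - q + ε ≠ 0 := by linarith
  have h3 : 1 + ε - q ≠ 0 := by linarith
  field_simp
  ring

theorem log_ratio_add_le_cube {q ε : ℝ} (hq0 : 0 < q) (hq1 : q < 1) (hε : |ε| ≤ (1 - q) / 2) :
    2 * q / (1 - q) * log (1 + ε) + log ((1 - q * (1 + ε)) / (1 - q / (1 + ε)))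
      ≤ (2 * (1 + q) / (1 - q) + 4 / (1 - q) ^ 3) * |ε| ^ 3 := by
  have hq : 0 < 1 - q := by linarith
  have hεhalf : |ε| ≤ 1 / 2 := by linarith
  obtain ⟨hεl, -⟩ := abs_le.mp hε
  set v := -(q * ε) / (1 - q)
  set w := ε / (1 - q)
  have hv : |v| = q * |ε| / (1 - q) := by
    rw [abs_div, abs_of_pos hq, abs_neg, abs_mul, abs_of_pos hq0]
  have hw : |w| = |ε| / (1 - q) := by rw [abs_div, abs_of_pos hq]
  have hvhalf : |v| ≤ 1 / 2 := by rw [hv, div_le_iff₀ hq]; nlinarith [abs_nonneg ε]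
  have hwhalf : |w| ≤ 1 / 2 := by rw [hw, div_le_iff₀ hq]; linarith
  have hv3 : |v| ^ 3 ≤ |ε| ^ 3 / (1 - q) ^ 3 := by
    rw [hv, div_pow]
    gcongr
    nlinarith [abs_nonneg ε]
  have hw3 : |w| ^ 3 = |ε| ^ 3 / (1 - q) ^ 3 := by rw [hw, div_pow]
  have h1ε : 0 < 1 + ε := by linarith
  have h1v : 0 < 1 + v := by linarith [neg_abs_le v]
  have h1w : 0 < 1 + w := by linarith [neg_abs_le w]
  have hlog : log ((1 - q * (1 + ε)) / (1 - q / (1 + ε)))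
      = log (1 + v) + log (1 + ε) - log (1 + w) := by
    rw [one_sub_mul_div_one_sub_div_eq hq1 (by linarith) (by linarith),
      log_div (mul_pos h1v h1ε).ne' h1w.ne', log_mul h1v.ne' h1ε.ne']
  have hcancel : (1 + q) / (1 - q) * (ε - ε ^ 2 / 2) + (v - v ^ 2 / 2) - (w - w ^ 2 / 2) = 0 := by
    simp only [v, w]
    field_simp
    ring
  have hα : 2 * q / (1 - q) + 1 = (1 + q) / (1 - q) := by field_simp; ring
  have hTε := mul_le_mul_of_nonneg_left (abs_le.mp (abs_log_one_add_sub_le hεhalf)).2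
    (by positivity : 0 ≤ (1 + q) / (1 - q))
  have hTv := (abs_le.mp (abs_log_one_add_sub_le hvhalf)).2
  have hTw := (abs_le.mp (abs_log_one_add_sub_le hwhalf)).1
  rw [hlog]
  linear_combination hTε + hTv + hTw + 2 * hv3 + 2 * hw3 + hcancel + log (1 + ε) * hα

theorem rpow_add_mul_ratio_pow_le {q ε : ℝ} (hq0 : 0 < q) (hq1 : q < 1)
    (hε : |ε| ≤ (1 - q) / 2) (hε0 : ε ≤ 0) (n : ℕ) (y : ℝ) :
    (1 + ε) ^ (2 * q / (1 - q) * n + y + 1) * ((1 - q * (1 + ε)) / (1 - q / (1 + ε))) ^ (n - 2)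
      ≤ exp ((2 * (1 + q) / (1 - q) + 4 / (1 - q) ^ 3) * |ε| ^ 3 * n) * (1 + ε) ^ y := by
  obtain ⟨hεl, -⟩ := abs_le.mp hε
  set s := 1 + ε
  set R := (1 - q * s) / (1 - q / s)
  have hs0 : 0 < s := by linarith
  have hs1 : s ≤ 1 := by linarith
  have hqs : q / s < 1 := (div_lt_one hs0).mpr (by linarith)
  have hR : 1 ≤ R := by
    rw [le_div_iff₀ (by linarith), one_mul]
    have : q ≤ q / s := by rw [le_div_iff₀ hs0]; nlinarith
    nlinarith
  have hR0 : 0 < R := by linarith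
  calc s ^ (2 * q / (1 - q) * n + y + 1) * R ^ (n - 2)
      = s ^ (2 * q / (1 - q) * n) * R ^ (n - 2) * s ^ y * s := by
        rw [rpow_add hs0, rpow_add hs0, rpow_one]; ring
    _ ≤ s ^ (2 * q / (1 - q) * n) * R ^ n * s ^ y * 1 := by
        gcongr
        exact Nat.sub_le n 2
    _ = exp ((2 * q / (1 - q) * log s + log R) * n) * s ^ y := by
        rw [mul_one, rpow_def_of_pos hs0, ← exp_log (pow_pos hR0 n), log_pow, ← exp_add]
        ring_nf
    _ ≤ exp ((2 * (1 + q) / (1 - q) + 4 / (1 - q) ^ 3) * |ε| ^ 3 * n) * s ^ y := by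
        gcongr
        exact log_ratio_add_le_cube hq0 hq1 hε

theorem one_add_div_rpow_mul_le {a b u X : ℝ} (ha : a < 0) (hb : 0 < b) (hab : -(1 / 2) ≤ a / b)
    (hu : 0 ≤ u) (hX : -u ≤ X) :
    (1 + a / b) ^ (b * X) ≤ exp (3 / 2 * -a * u) * exp (a / 2 * X) := by
  have hab0 : a / b ≤ 0 := (div_neg_of_neg_of_pos ha hb).le
  set L := b * log (1 + a / b)
  have hLa : L ≤ a := by
    have := log_le_sub_one_of_pos (x := 1 + a / b) (by linarith)
    calc L ≤ b * (a / b) := mul_le_mul_of_nonneg_left (by linarith) hb.le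
      _ = a := by field_simp
  have hLa' : 2 * a ≤ L := by
    calc 2 * a = b * (2 * (a / b)) := by field_simp
      _ ≤ L := mul_le_mul_of_nonneg_left (two_mul_le_log_one_add hab hab0) hb.le
  rw [rpow_def_of_pos (by linarith), ← exp_add, exp_le_exp]
  nlinarith [mul_nonneg (by linarith : 0 ≤ a / 2 - L) (by linarith : 0 ≤ X + u),
    mul_nonneg (by linarith : 0 ≤ L - 2 * a) hu]

theorem rpow_mul_ratio_pow_le_of_le_scale {q a b u X : ℝ} (hq0 : 0 < q) (hq1 : q < 1)
    (ha : a < 0) (hu : 0 ≤ u) (hb : 2 * -a / (1 - q) ≤ b) (hX : -u ≤ X) (n : ℕ) :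
    (1 + a / b) ^ (2 * q / (1 - q) * n + b * X + 1)
        * ((1 - q * (1 + a / b)) / (1 - q / (1 + a / b))) ^ (n - 2)
      ≤ exp ((2 * (1 + q) / (1 - q) + 4 / (1 - q) ^ 3) * |a / b| ^ 3 * n + 3 / 2 * -a * u)
        * exp (a / 2 * X) := by
  have hq : 0 < 1 - q := by linarith
  have hb0 : 0 < b := lt_of_lt_of_le (div_pos (by linarith) hq) hb
  have hab : |a / b| ≤ (1 - q) / 2 := by
    rw [abs_div, abs_of_neg ha, abs_of_pos hb0, div_le_iff₀ hb0]
    rw [div_le_iff₀ hq] at hb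
    linarith
  have hab0 : a / b ≤ 0 := (div_neg_of_neg_of_pos ha hb0).le
  have hab' : -(1 / 2) ≤ a / b := by linarith [neg_abs_le (a / b)]
  calc _ ≤ _ := rpow_add_mul_ratio_pow_le hq0 hq1 hab hab0 n (b * X)
    _ ≤ exp ((2 * (1 + q) / (1 - q) + 4 / (1 - q) ^ 3) * |a / b| ^ 3 * n)
          * (exp (3 / 2 * -a * u) * exp (a / 2 * X)) := by
        gcongr
        exact one_add_div_rpow_mul_le ha hb0 hab' hu hX
    _ = _ := by rw [exp_add]; ring

/-- **Uniform exponential bound on `f^s` under KPZ critical scaling.** With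
`c₀ = 2q̂(1+q̂)/(1−q̂)³`, `s_N = 1 + (c₀N/2)^{−1/3}·s̃` (`s̃ < 0`) and
`k_N(X) = (2q̂/(1−q̂))·N + (c₀N/2)^{1/3}·X`, the functions
`f_N(X) = s_N^{k_N(X)+1}·((1−q̂s_N)/(1−q̂/s_N))^{N−2}` satisfy
`f_N(X) ≤ C·exp((s̃+σ)X)` for all `N ≥ N₀` and `X ≥ −u`, for some `C > 0`,
`σ ∈ (0, −s̃)` and `N₀ ∈ ℕ`. -/
theorem f_s_uniform_bound_critical_scaling
    (qh : ℝ) (hq : qh ∈ Set.Ioo (0 : ℝ) 1) (sTilde : ℝ) (hst : sTilde < 0)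
    (u : ℝ) (hu : 0 < u) :
    ∃ C : ℝ, 0 < C ∧ ∃ σ : ℝ, σ ∈ Set.Ioo (0 : ℝ) (-sTilde) ∧ ∃ N₀ : ℕ,
      ∀ N : ℕ, N₀ ≤ N → ∀ X : ℝ, -u ≤ X →
        (let c₀ : ℝ := 2 * qh * (1 + qh) / (1 - qh) ^ 3
         let sN : ℝ := 1 + (c₀ * N / 2) ^ (-(1 / 3) : ℝ) * sTilde
         let kN : ℝ := (2 * qh / (1 - qh)) * N + (c₀ * N / 2) ^ ((1 : ℝ) / 3) * X
         sN ^ (kN + 1) * ((1 - qh * sN) / (1 - qh / sN)) ^ (N - 2))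
        ≤ C * Real.exp ((sTilde + σ) * X) := by
  obtain ⟨hq0, hq1⟩ := hq
  have hq : 0 < 1 - qh := by linarith
  have hc₀ : 0 < 2 * qh * (1 + qh) / (1 - qh) ^ 3 := by positivity
  set c₀ := 2 * qh * (1 + qh) / (1 - qh) ^ 3
  set M := 2 * (1 + qh) / (1 - qh) + 4 / (1 - qh) ^ 3
  have hscale : Tendsto (fun N : ℕ => (c₀ * N / 2) ^ ((1 : ℝ) / 3)) atTop atTop :=
    (tendsto_rpow_atTop (by norm_num)).comp
      ((tendsto_natCast_atTop_atTop.const_mul_atTop hc₀).atTop_div_const two_pos)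
  obtain ⟨N₀, hN₀⟩ := eventually_atTop.mp (hscale.eventually_ge_atTop (2 * -sTilde / (1 - qh)))
  refine ⟨exp (M * (2 * (-sTilde) ^ 3 / c₀) + 3 / 2 * -sTilde * u), exp_pos _, -sTilde / 2,
    ⟨by linarith, by linarith⟩, N₀, fun N hN X hX => ?_⟩
  dsimp only
  set b := (c₀ * N / 2) ^ ((1 : ℝ) / 3)
  have hb : 2 * -sTilde / (1 - qh) ≤ b := hN₀ N hN
  have hb0 : 0 < b := lt_of_lt_of_le (div_pos (by linarith) hq) hb
  have hP : 0 ≤ c₀ * N / 2 := by have := hc₀.le; positivity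
  have hb3 : b ^ 3 = c₀ * N / 2 := by
    have := rpow_inv_natCast_pow (n := 3) hP (by norm_num)
    rwa [Nat.cast_ofNat, ← one_div] at this
  have hN : (N : ℝ) ≠ 0 := by
    rintro hN0
    rw [hN0, mul_zero, zero_div] at hb3
    exact hb0.ne' (pow_eq_zero_iff (by norm_num) |>.mp hb3)
  have hsN : (c₀ * N / 2) ^ (-(1 / 3) : ℝ) * sTilde = sTilde / b := by
    rw [rpow_neg hP, inv_mul_eq_div]
  have hconst : |sTilde / b| ^ 3 * N = 2 * (-sTilde) ^ 3 / c₀ := by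
    rw [abs_div, abs_of_neg hst, abs_of_pos hb0, div_pow, hb3]
    field_simp
  rw [hsN, show sTilde + -sTilde / 2 = sTilde / 2 by ring, ← hconst, ← mul_assoc]
  exact rpow_mul_ratio_pow_le_of_le_scale hq0 hq1 hst hu.le hb hX N
end
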